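/- arXiv:math/0610095 — 5 statements merged into one kernel-verified Lean document; each statement's English description precedes it below -/
import Mathlib

section
/- Let I be an ideal of ℂ[x_1,...,x_n] containing h_{k}(X_n), h_{k+1}(X_n), ..., h_{k+p}(X_n) and e_{p+2}(X_n), e_{p+3}(X_n), ..., e_n(X_n), where k ≥ 1 and p ≥ 0. Then h_{k+p+a}(X_n) ∈ I for every integer a ≥ 1. -/
/-! The series `E(t) = ∑ (-1)^r e_r t^r = ∏ (1 - x_i t)` and `H(t) = ∑ h_d t^d = ∏ (1 - x_i t)⁻¹`
satisfy `E(t) H(t) = 1`: adjoining a variable `y` multiplies `E` by `1 - y t` and divides `H` by it.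
Comparing coefficients, `h_m = -∑_{i ≥ 1} (-1)^i e_i h_{m-i}`, and for `m > k + p` every term
contains either some `e_i` with `i ≥ p + 2` (in `I`, or zero if `i > n`) or some `h_j` with
`k ≤ j < m`, so strong induction on `m` puts `h_m` in `I`. -/

open MvPolynomial

lemma Multiset.esymm_cons {R : Type*} [CommSemiring R] (a : R) (s : Multiset R) (n : ℕ) :
    (a ::ₘ s).esymm (n + 1) = s.esymm (n + 1) + a * s.esymm n := by
  simp only [Multiset.esymm, Multiset.powersetCard_cons, Multiset.map_add, Multiset.sum_add,
    Multiset.map_map, Function.comp_def, Multiset.prod_cons, Multiset.sum_map_mul_left]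

namespace PowerSeries

variable {R : Type*} [Ring R]

lemma coeff_zero_one_sub_C_mul_X_mul (y : R) (f : PowerSeries R) :
    coeff 0 ((1 - C y * X) * f) = coeff 0 f := by
  simp

lemma coeff_one_sub_C_mul_X_mul (y : R) (f : PowerSeries R) (n : ℕ) :
    coeff (n + 1) ((1 - C y * X) * f) = coeff (n + 1) f - y * coeff n f := by
  rw [sub_mul, one_mul, mul_assoc, map_sub, coeff_C_mul, coeff_succ_X_mul]

end PowerSeries

noncomputable section

open Finset

namespace MvPolynomial

variable {σ τ R : Type*} [Fintype σ] [Fintype τ]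

section CommSemiring

variable [CommSemiring R]

lemma esymm_option_succ (r : ℕ) :
    esymm (Option σ) R (r + 1) =
      rename some (esymm σ R (r + 1)) + X none * rename some (esymm σ R r) := by
  have h_univ : (Finset.univ : Finset (Option σ)).val = none ::ₘ Finset.univ.val.map some := rfl
  rw [rename_eq_aeval, aeval_esymm_eq_multiset_esymm, aeval_esymm_eq_multiset_esymm,
    esymm_eq_multiset_esymm, h_univ, Multiset.map_cons, Multiset.map_map, Multiset.esymm_cons]

lemma hsymm_option_succ [DecidableEq σ] (d : ℕ) :
    hsymm (Option σ) R (d + 1) =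
      X none * hsymm (Option σ) R d + rename some (hsymm σ R (d + 1)) := by
  rw [hsymm, ← Equiv.sum_comp (symOptionSuccEquiv (α := σ) (n := d)).symm
    (fun s : Sym (Option σ) (d + 1) => (s.1.map X).prod), Fintype.sum_sum_type,
    hsymm, Finset.mul_sum, hsymm, map_sum]
  congr 1 <;> refine Finset.sum_congr rfl fun s _ => ?_
  · simp [symOptionSuccEquiv, SymOptionSuccEquiv.decode_inl, Sym.coe_cons]
  · simp [symOptionSuccEquiv, SymOptionSuccEquiv.decode_inr, map_multiset_prod]

lemma esymm_eq_zero_of_card_lt {r : ℕ} (h : Fintype.card σ < r) : esymm σ R r = 0 := by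
  rw [esymm, Finset.powersetCard_eq_empty.mpr (by simpa using h), Finset.sum_empty]

lemma hsymm_succ_of_isEmpty [DecidableEq σ] [IsEmpty σ] (d : ℕ) : hsymm σ R (d + 1) = 0 := by
  simp [hsymm]

end CommSemiring

section CommRing

variable [CommRing R]

variable (σ R) in
def esymmSeries : PowerSeries (MvPolynomial σ R) := PowerSeries.mk fun r => (-1) ^ r * esymm σ R r

variable (σ R) in
def hsymmSeries [DecidableEq σ] : PowerSeries (MvPolynomial σ R) := PowerSeries.mk (hsymm σ R)

lemma map_rename_esymmSeries (e : σ ≃ τ) :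
    PowerSeries.map (rename e).toRingHom (esymmSeries σ R) = esymmSeries τ R := by
  refine PowerSeries.ext fun r => ?_
  simp [esymmSeries, rename_esymm]

lemma map_rename_hsymmSeries [DecidableEq σ] [DecidableEq τ] (e : σ ≃ τ) :
    PowerSeries.map (rename e).toRingHom (hsymmSeries σ R) = hsymmSeries τ R := by
  refine PowerSeries.ext fun r => ?_
  simp [hsymmSeries, rename_hsymm]

lemma esymmSeries_of_isEmpty [IsEmpty σ] : esymmSeries σ R = 1 := by
  refine PowerSeries.ext fun r => ?_
  rcases r with _ | r
  · simp [esymmSeries]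
  · simp [esymmSeries, esymm_eq_zero_of_card_lt]

lemma hsymmSeries_of_isEmpty [DecidableEq σ] [IsEmpty σ] : hsymmSeries σ R = 1 := by
  refine PowerSeries.ext fun d => ?_
  rcases d with _ | d
  · simp [hsymmSeries]
  · simp [hsymmSeries, hsymm_succ_of_isEmpty]

lemma esymmSeries_option :
    esymmSeries (Option σ) R =
      (1 - PowerSeries.C (X none) * PowerSeries.X) *
        PowerSeries.map (rename some).toRingHom (esymmSeries σ R) := by
  refine PowerSeries.ext fun r => ?_
  rcases r with _ | r
  · simp [esymmSeries, PowerSeries.coeff_zero_one_sub_C_mul_X_mul, PowerSeries.coeff_map]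
  · rw [PowerSeries.coeff_one_sub_C_mul_X_mul]
    simp only [esymmSeries, PowerSeries.coeff_map, PowerSeries.coeff_mk, esymm_option_succ,
      AlgHom.toRingHom_eq_coe, RingHom.coe_coe, map_mul, map_pow, map_neg, map_one]
    ring

lemma hsymmSeries_option [DecidableEq σ] :
    (1 - PowerSeries.C (X none) * PowerSeries.X) * hsymmSeries (Option σ) R =
      PowerSeries.map (rename some).toRingHom (hsymmSeries σ R) := by
  refine PowerSeries.ext fun d => ?_
  rcases d with _ | d
  · simp [hsymmSeries, PowerSeries.coeff_zero_one_sub_C_mul_X_mul, PowerSeries.coeff_map]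
  · rw [PowerSeries.coeff_one_sub_C_mul_X_mul]
    simp only [hsymmSeries, PowerSeries.coeff_map, PowerSeries.coeff_mk, hsymm_option_succ,
      AlgHom.toRingHom_eq_coe, RingHom.coe_coe]
    ring

theorem esymmSeries_mul_hsymmSeries [DecidableEq σ] :
    esymmSeries σ R * hsymmSeries σ R = 1 := by
  -- `hsymm` depends on a `DecidableEq` instance, which `Fintype.induction_empty_option` does not carry
  revert ‹DecidableEq σ›
  refine Fintype.induction_empty_option
    (P := fun σ _ => ∀ [DecidableEq σ], esymmSeries σ R * hsymmSeries σ R = 1) ?_ ?_ ?_ σ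
  · intro σ τ _ e h _
    classical
    let := Fintype.ofEquiv τ e.symm
    rw [← map_rename_esymmSeries e, ← map_rename_hsymmSeries e, ← map_mul, h, map_one]
  · intro _
    rw [esymmSeries_of_isEmpty, hsymmSeries_of_isEmpty, one_mul]
  · intro σ _ h hdec
    classical
    obtain rfl : hdec = Option.instDecidableEq := Subsingleton.elim _ _
    rw [esymmSeries_option, mul_comm (1 - _), mul_assoc, hsymmSeries_option, ← map_mul, h,
      map_one]

theorem sum_antidiagonal_esymm_mul_hsymm_eq_zero [DecidableEq σ] {m : ℕ} (hm : m ≠ 0) :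
    ∑ x ∈ antidiagonal m, (-1) ^ x.1 * esymm σ R x.1 * hsymm σ R x.2 = 0 := by
  have := congrArg (PowerSeries.coeff m) (esymmSeries_mul_hsymmSeries (σ := σ) (R := R))
  simpa [PowerSeries.coeff_mul, esymmSeries, hsymmSeries, PowerSeries.coeff_one, hm] using this

theorem hsymm_mem_of_forall_esymm_mem [DecidableEq σ] {I : Ideal (MvPolynomial σ R)} {k p : ℕ}
    (hh : ∀ j ≤ p, hsymm σ R (k + j) ∈ I)
    (he : ∀ r, p + 2 ≤ r → r ≤ Fintype.card σ → esymm σ R r ∈ I) (m : ℕ) (hkm : k ≤ m) :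
    hsymm σ R m ∈ I := by
  induction m using Nat.strong_induction_on with
  | _ m ih =>
  by_cases hmp : m ≤ k + p
  · obtain ⟨j, rfl⟩ := Nat.exists_eq_add_of_le hkm
    exact hh j (by omega)
  have esymm_mem (r : ℕ) (hr : p + 2 ≤ r) : esymm σ R r ∈ I := by
    by_cases hrn : r ≤ Fintype.card σ
    · exact he r hr hrn
    · rw [esymm_eq_zero_of_card_lt (by omega)]
      exact I.zero_mem
  obtain ⟨M, rfl⟩ : ∃ M, m = M + 1 := ⟨m - 1, by omega⟩
  have newton := sum_antidiagonal_esymm_mul_hsymm_eq_zero (σ := σ) (R := R) M.succ_ne_zero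
  rw [Finset.Nat.sum_antidiagonal_succ] at newton
  simp only [pow_zero, one_mul, esymm_zero] at newton
  rw [eq_neg_of_add_eq_zero_left newton]
  refine I.neg_mem (I.sum_mem fun x hx => ?_)
  rw [HasAntidiagonal.mem_antidiagonal] at hx
  by_cases hx1 : p + 2 ≤ x.1 + 1
  · exact I.mul_mem_right _ (I.mul_mem_left _ (esymm_mem _ hx1))
  · exact I.mul_mem_left _ (ih x.2 (by omega) (by omega))

end CommRing
end MvPolynomial

end

theorem stmt_3_general (n k p : ℕ)
    (I : Ideal (MvPolynomial (Fin n) ℂ))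
    (hh : ∀ j ≤ p, hsymm (Fin n) ℂ (k + j) ∈ I)
    (he : ∀ r, p + 2 ≤ r → r ≤ n → esymm (Fin n) ℂ r ∈ I) :
    ∀ a, 1 ≤ a → hsymm (Fin n) ℂ (k + p + a) ∈ I := fun _ _ =>
  hsymm_mem_of_forall_esymm_mem hh (by simpa using he) _ (by omega)

/-- If an ideal `I` of `ℂ[x_1,...,x_n]` contains `h_k, h_{k+1}, ..., h_{k+p}` and
`e_{p+2}, e_{p+3}, ..., e_n`, with `k ≥ 1`, then `h_{k+p+a} ∈ I` for every `a ≥ 1`. -/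
theorem stmt_3 (n k p : ℕ) (hk : 1 ≤ k)
    (I : Ideal (MvPolynomial (Fin n) ℂ))
    (hh : ∀ j ≤ p, hsymm (Fin n) ℂ (k + j) ∈ I)
    (he : ∀ r, p + 2 ≤ r → r ≤ n → esymm (Fin n) ℂ r ∈ I) :
    ∀ a, 1 ≤ a → hsymm (Fin n) ℂ (k + p + a) ∈ I :=
  stmt_3_general n k p I hh he
end

section
/- Fix integers k ≥ 1 and p ≥ 0, and let λ be a partition all of whose parts lie in {k, k+1, ..., k+p}. Define L(λ) to be the partition with parts in {1,...,p+1} whose multiplicity of f (for 1 ≤ f ≤ p) equals the number of parts of λ congruent to f mod (p+1), and whose multiplicity of p+1 equals ∑_r ⌊λ_r/(p+1)⌋. Then the map λ ↦ L(λ) is injective on the set of such partitions λ. -/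
/-!
Reducing a part of `λ` mod `p + 1` loses nothing, since `{k, …, k+p}` is a complete system of
residues. The nonzero residues of `λ` are the parts of `L(λ)` other than `p + 1`. The parts
divisible by `p + 1` all equal the same `c ≥ p + 1`, and the number of copies of `p + 1` in `L(λ)`
then determines how many of them there are, since each contributes `c / (p + 1) ≥ 1`.
-/

/-- For a partition `λ` (as a multiset of parts) with all parts in `{k,...,k+p}`,
`L(λ)` is the partition whose multiplicity of `f` (for `1 ≤ f ≤ p`) is the number of
parts of `λ` congruent to `f` mod `p+1`, and whose multiplicity of `p+1` is
`∑_r ⌊λ_r/(p+1)⌋`. -/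
def Lmap (p : ℕ) (lam : Multiset ℕ) : Multiset ℕ :=
  Multiset.replicate ((lam.map (· / (p + 1))).sum) (p + 1) +
    (lam.map (· % (p + 1))).filter (· ≠ 0)

namespace Multiset

variable {α β : Type*}

theorem eq_of_map_eq_of_injOn {f : α → β} {s : Set α} (hf : s.InjOn f) {A B : Multiset α}
    (hA : ∀ x ∈ A, x ∈ s) (hB : ∀ x ∈ B, x ∈ s) (h : A.map f = B.map f) : A = B := by
  classical
  refine ext.2 fun x => ?_
  by_cases hx : x ∈ s
  · have count_eq : ∀ C : Multiset α, (∀ y ∈ C, y ∈ s) → C.count x = (C.map f).count (f x) := by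
      intro C hC
      rw [count_map, count_eq_card_filter_eq]
      exact congrArg card <| filter_congr fun y hy => ⟨(· ▸ rfl), hf hx (hC y hy)⟩
    rw [count_eq A hA, count_eq B hB, h]
  · rw [count_eq_zero_of_notMem (hx <| hA x ·), count_eq_zero_of_notMem (hx <| hB x ·)]

theorem eq_of_sum_map_eq_of_forall_eq {f : α → ℕ} {c : α} (hc : 0 < f c) {A B : Multiset α}
    (hA : ∀ x ∈ A, x = c) (hB : ∀ x ∈ B, x = c) (h : (A.map f).sum = (B.map f).sum) :
    A = B := by
  rw [eq_replicate_card.2 hA, eq_replicate_card.2 hB] at h ⊢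
  simp only [map_replicate, sum_replicate, smul_eq_mul] at h
  rw [Nat.eq_of_mul_eq_mul_right hc h]

end Multiset

theorem Nat.mod_injOn_Icc (k p : ℕ) : (Set.Icc k (k + p)).InjOn (· % (p + 1)) := by
  intro x hx y hy (hxy : x % (p + 1) = y % (p + 1))
  refine Nat.ModEq.eq_of_abs_lt hxy ?_
  rw [abs_lt]
  constructor <;> push_cast <;> linarith [hx.1, hx.2, hy.1, hy.2]

theorem ne_of_mem_filter_map_mod {p : ℕ} {lam : Multiset ℕ} {r : ℕ}
    (hr : r ∈ (lam.map (· % (p + 1))).filter (· ≠ 0)) : r ≠ p + 1 := by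
  obtain ⟨⟨x, -, rfl⟩, -⟩ := Multiset.mem_filter.1 hr |>.imp_left Multiset.mem_map.1
  exact (Nat.mod_lt x p.succ_pos).ne

theorem Lmap_filter_ne (p : ℕ) (lam : Multiset ℕ) :
    (Lmap p lam).filter (· ≠ p + 1) = (lam.map (· % (p + 1))).filter (· ≠ 0) := by
  rw [Lmap, Multiset.filter_add, Multiset.filter_eq_self.2 fun _ => ne_of_mem_filter_map_mod,
    Multiset.filter_eq_nil.2 fun _ h => not_not.2 (Multiset.eq_of_mem_replicate h), zero_add]

theorem Lmap_count (p : ℕ) (lam : Multiset ℕ) :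
    (Lmap p lam).count (p + 1) = (lam.map (· / (p + 1))).sum := by
  rw [Lmap, Multiset.count_add, Multiset.count_replicate_self,
    Multiset.count_eq_zero_of_notMem fun h => ne_of_mem_filter_map_mod h rfl, add_zero]

theorem Nat.div_mul_mem_Icc {k : ℕ} (p : ℕ) : (k + p) / (p + 1) * (p + 1) ∈ Set.Icc k (k + p) :=
  ⟨by have := Nat.lt_div_mul_add (a := k + p) (b := p + 1) p.succ_pos; omega,
    Nat.div_mul_le_self _ _⟩

section LmapEq

variable {k p : ℕ} {lam₁ lam₂ : Multiset ℕ}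

theorem filter_mod_ne_zero_eq_of_Lmap_eq (h₁ : ∀ x ∈ lam₁, x ∈ Set.Icc k (k + p))
    (h₂ : ∀ x ∈ lam₂, x ∈ Set.Icc k (k + p)) (hL : Lmap p lam₁ = Lmap p lam₂) :
    lam₁.filter (· % (p + 1) ≠ 0) = lam₂.filter (· % (p + 1) ≠ 0) := by
  refine Multiset.eq_of_map_eq_of_injOn (Nat.mod_injOn_Icc k p)
    (fun x hx => h₁ x (Multiset.mem_of_mem_filter hx))
    (fun x hx => h₂ x (Multiset.mem_of_mem_filter hx)) ?_
  simpa only [Lmap_filter_ne, Multiset.filter_map, Function.comp_def]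
    using congrArg (·.filter (· ≠ p + 1)) hL

theorem filter_mod_eq_zero_eq_of_Lmap_eq (hk : 1 ≤ k) (h₁ : ∀ x ∈ lam₁, x ∈ Set.Icc k (k + p))
    (h₂ : ∀ x ∈ lam₂, x ∈ Set.Icc k (k + p)) (hL : Lmap p lam₁ = Lmap p lam₂) :
    lam₁.filter (· % (p + 1) = 0) = lam₂.filter (· % (p + 1) = 0) := by
  have hc := Nat.div_mul_mem_Icc (k := k) p
  have hc_div : 0 < (k + p) / (p + 1) * (p + 1) / (p + 1) := by
    rw [Nat.mul_div_cancel _ p.succ_pos]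
    exact Nat.div_pos (by omega) p.succ_pos
  have h_eq_c : ∀ lam : Multiset ℕ, (∀ x ∈ lam, x ∈ Set.Icc k (k + p)) →
      ∀ x ∈ lam.filter (· % (p + 1) = 0), x = (k + p) / (p + 1) * (p + 1) :=
    fun lam hlam x hx => Nat.mod_injOn_Icc k p (hlam x (Multiset.mem_of_mem_filter hx)) hc <| by
      simpa using (Multiset.mem_filter.1 hx).2
  refine Multiset.eq_of_sum_map_eq_of_forall_eq (f := (· / (p + 1))) hc_div
    (h_eq_c lam₁ h₁) (h_eq_c lam₂ h₂) ?_
  have hsum := Lmap_count p lam₁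
  rwa [hL, Lmap_count, ← Multiset.filter_add_not (· % (p + 1) = 0) lam₁,
    ← Multiset.filter_add_not (· % (p + 1) = 0) lam₂, Multiset.map_add, Multiset.map_add,
    Multiset.sum_add, Multiset.sum_add, filter_mod_ne_zero_eq_of_Lmap_eq h₁ h₂ hL,
    add_right_cancel_iff, eq_comm] at hsum

end LmapEq

/-- The map `λ ↦ L(λ)` is injective on partitions with all parts in `{k,...,k+p}`,
for `k ≥ 1`. -/
theorem stmt_5 (k p : ℕ) (hk : 1 ≤ k) (lam₁ lam₂ : Multiset ℕ)
    (h₁ : ∀ x ∈ lam₁, k ≤ x ∧ x ≤ k + p) (h₂ : ∀ x ∈ lam₂, k ≤ x ∧ x ≤ k + p)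
    (hL : Lmap p lam₁ = Lmap p lam₂) : lam₁ = lam₂ := by
  rw [← Multiset.filter_add_not (· % (p + 1) = 0) lam₁,
    ← Multiset.filter_add_not (· % (p + 1) = 0) lam₂,
    filter_mod_eq_zero_eq_of_Lmap_eq hk h₁ h₂ hL]
  exact congrArg _ (filter_mod_ne_zero_eq_of_Lmap_eq h₁ h₂ hL)
end

section
/- With λ and L(λ) as above (parts of λ in {k,...,k+p}), the number of domino tabloids d_{λ, L(λ)} of shape λ and type L(λ) is nonzero, and L(λ) is the lexicographically largest partition μ with all parts at most p+1 such that d_{λ,μ} ≠ 0. -/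
/-- `dominoCount l μ` counts domino tabloids of shape `l` and type `μ`: choices of a
composition (ordered list of positive domino lengths) for each row of `l` whose total
multiset of lengths is `μ`. -/
noncomputable def dominoCount (l : List ℕ) (μ : Multiset ℕ) : ℕ :=
  Nat.card {c : List (List ℕ) //
    List.Forall₂ (fun comp row => (∀ x ∈ comp, 0 < x) ∧ comp.sum = row) c l ∧
    (↑c.flatten : Multiset ℕ) = μ}

/-- The parts of a multiset listed in weakly decreasing order. -/
def descSort (μ : Multiset ℕ) : List ℕ := (μ.sort (· ≤ ·)).reverse

/-!
Compare multisets by their multiplicities from the largest element down (the colex order on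
multiplicity functions). This order is compatible with addition, and a strict increase in it
makes the decreasingly sorted list of parts lexicographically larger. Cutting a row of length
`n` greedily into `n / (p + 1)` dominoes of length `p + 1` and one of length `n % (p + 1)`
gives the largest composition of `n` with parts at most `p + 1` in this order, and `L(λ)` is
the union of these greedy compositions over the rows. Adding up over the rows, the type of any
tabloid with dominoes of length at most `p + 1` is at most `L(λ)`.
-/

theorem List.lex_lt_of_count_lt {α : Type*} [LinearOrder α] :
    ∀ {a b : List α}, a.Pairwise (· ≥ ·) → b.Pairwise (· ≥ ·) → ∀ {v : α},
      (∀ u, v < u → a.count u = b.count u) → a.count v < b.count v →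
      List.Lex (· < ·) a b
  | [], [], _, _, _, _, hv => by simp at hv
  | [], _ :: _, _, _, _, _, _ => List.Lex.nil
  | _ :: _, [], _, _, _, _, hv => by simp at hv
  | x :: a, y :: b, ha, hb, v, habove, hv => by
    rcases lt_trichotomy x y with hxy | rfl | hxy
    · exact List.Lex.rel hxy
    · refine List.Lex.cons (List.lex_lt_of_count_lt ha.of_cons hb.of_cons
        (v := v) (fun u hu => ?_) ?_)
      · simpa [List.count_cons] using habove u hu
      · simpa [List.count_cons] using hv
    · -- impossible: `x` exceeds every entry of `y :: b`
      have hbelow : ∀ u, y < u → (y :: b).count u = 0 := fun u hu =>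
        List.count_eq_zero.2 fun hmem => by
          rcases List.mem_cons.1 hmem with rfl | hmem
          · exact hu.false
          · exact (List.rel_of_pairwise_cons hb hmem).not_gt hu
      rcases lt_or_ge v x with hvx | hxv
      · have := habove x hvx
        rw [hbelow x hxy, List.count_cons_self] at this
        omega
      · rw [hbelow v (hxy.trans_le hxv)] at hv
        omega

theorem Multiset.eq_singleton_sum_of_sum_mem {s : Multiset ℕ} (hpos : ∀ x ∈ s, 0 < x)
    (hmem : s.sum ∈ s) : s = {s.sum} := by
  have hcons := Multiset.cons_erase hmem
  have hrest : (s.erase s.sum).sum = 0 := by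
    have := congrArg Multiset.sum hcons
    rw [Multiset.sum_cons] at this
    omega
  rw [Multiset.sum_eq_zero_iff] at hrest
  rw [← hcons, Multiset.eq_zero_of_forall_notMem fun x hx =>
    (hpos x (Multiset.mem_of_mem_erase hx)).ne' (hrest x hx)]
  simp

namespace DominoTabloid

section CountColex

variable {α : Type*} [DecidableEq α]

noncomputable def countColex (s : Multiset α) : Colex (α →₀ ℕ) :=
  toColex (Multiset.toFinsupp s)

theorem countColex_add (s t : Multiset α) :
    countColex (s + t) = countColex s + countColex t := by
  simp [countColex]

theorem countColex_injective : Function.Injective (countColex (α := α)) :=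
  toColex.injective.comp Multiset.toFinsupp.injective

end CountColex

section CountColexLinear

variable {α : Type*} [LinearOrder α]

theorem countColex_lt_iff {s t : Multiset α} :
    countColex s < countColex t ↔
      ∃ v, (∀ u, v < u → s.count u = t.count u) ∧ s.count v < t.count v :=
  Finsupp.Colex.lt_iff

theorem countColex_lt_of_forall_lt {s t : Multiset α} {v : α} (hv : v ∈ t)
    (ht : ∀ x ∈ t, x ≤ v) (hs : ∀ x ∈ s, x < v) : countColex s < countColex t := by
  refine countColex_lt_iff.2 ⟨v, fun u hvu => ?_, ?_⟩
  · rw [Multiset.count_eq_zero.2 fun h => (hs u h).not_gt hvu,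
      Multiset.count_eq_zero.2 fun h => (ht u h).not_gt hvu]
  · rw [Multiset.count_eq_zero.2 fun h => (hs v h).false]
    exact Multiset.count_pos.2 hv

end CountColexLinear

theorem pairwise_descSort (μ : Multiset ℕ) : (descSort μ).Pairwise (· ≥ ·) :=
  List.pairwise_reverse.2 (Multiset.pairwise_sort _ _)

theorem count_descSort (μ : Multiset ℕ) (v : ℕ) : (descSort μ).count v = μ.count v := by
  rw [← Multiset.coe_count, descSort, Multiset.coe_reverse, Multiset.sort_eq]

theorem descSort_eq_or_lex_of_countColex_le {μ ν : Multiset ℕ}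
    (h : countColex μ ≤ countColex ν) :
    descSort μ = descSort ν ∨ List.Lex (· < ·) (descSort μ) (descSort ν) := by
  rcases h.eq_or_lt with h | h
  · exact Or.inl (congrArg descSort (countColex_injective h))
  · obtain ⟨v, habove, hv⟩ := countColex_lt_iff.1 h
    refine Or.inr (List.lex_lt_of_count_lt (pairwise_descSort μ) (pairwise_descSort ν)
      (v := v) (fun u hu => ?_) ?_)
    · simpa only [count_descSort] using habove u hu
    · simpa only [count_descSort] using hv

def greedyComposition (m n : ℕ) : List ℕ :=
  List.replicate (n / m) m ++ if n % m = 0 then [] else [n % m]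

section Greedy

variable {m : ℕ}

theorem sum_greedyComposition (n : ℕ) : (greedyComposition m n).sum = n := by
  have := Nat.div_add_mod n m
  unfold greedyComposition
  split_ifs <;> simp <;> linarith

theorem pos_of_mem_greedyComposition {n x : ℕ} (hm : 0 < m)
    (hx : x ∈ greedyComposition m n) : 0 < x := by
  unfold greedyComposition at hx
  split_ifs at hx <;> simp at hx <;> omega

theorem le_of_mem_greedyComposition {n x : ℕ} (hm : 0 < m)
    (hx : x ∈ greedyComposition m n) : x ≤ m := by
  have := Nat.mod_lt n hm
  unfold greedyComposition at hx
  split_ifs at hx <;> simp at hx <;> omega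

theorem greedyComposition_of_le {n : ℕ} (hm : 0 < m) (hmn : m ≤ n) :
    greedyComposition m n = m :: greedyComposition m (n - m) := by
  simp [greedyComposition, Nat.div_eq_sub_div hm hmn, Nat.mod_eq_sub_mod hmn,
    List.replicate_succ]

theorem greedyComposition_of_lt {n : ℕ} (hnm : n < m) :
    greedyComposition m n = if n = 0 then [] else [n] := by
  simp [greedyComposition, Nat.div_eq_of_lt hnm, Nat.mod_eq_of_lt hnm]

end Greedy

theorem countColex_le_greedyComposition_of_sum_lt {m : ℕ} {ν : Multiset ℕ}
    (hpos : ∀ x ∈ ν, 0 < x) (hνm : ν.sum < m) :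
    countColex ν ≤ countColex ↑(greedyComposition m ν.sum) := by
  rw [greedyComposition_of_lt hνm]
  split_ifs with h0
  · rw [Multiset.eq_zero_of_forall_notMem fun x hx =>
      (hpos x hx).ne' (Multiset.sum_eq_zero_iff.1 h0 x hx)]
    rfl
  by_cases hmem : ν.sum ∈ ν
  · exact (congrArg countColex (Multiset.eq_singleton_sum_of_sum_mem hpos hmem)).le
  · refine (countColex_lt_of_forall_lt (Multiset.mem_singleton_self _) (by simp)
      fun x hx => ?_).le
    exact (Multiset.le_sum_of_mem hx).lt_of_ne fun h => hmem (h ▸ hx)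

theorem countColex_le_greedyComposition {m : ℕ} (hm : 0 < m) :
    ∀ (n : ℕ) (ν : Multiset ℕ), (∀ x ∈ ν, 0 < x) → (∀ x ∈ ν, x ≤ m) → ν.sum = n →
      countColex ν ≤ countColex ↑(greedyComposition m n) := by
  intro n
  induction n using Nat.strong_induction_on with
  | _ n ih =>
  intro ν hpos hle hsum
  by_cases hmν : m ∈ ν
  · -- peel off one part `m` from both sides
    have hcons := Multiset.cons_erase hmν
    have hsum' : (ν.erase m).sum = n - m := by
      have := congrArg Multiset.sum hcons
      rw [Multiset.sum_cons] at this
      omega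
    have hmn : m ≤ n := hsum ▸ Multiset.le_sum_of_mem hmν
    rw [← hcons, greedyComposition_of_le hm hmn, ← Multiset.cons_coe,
      ← Multiset.singleton_add, ← Multiset.singleton_add, countColex_add, countColex_add]
    exact add_le_add le_rfl (ih (n - m) (by omega) _
      (fun x hx => hpos x (Multiset.mem_of_mem_erase hx))
      (fun x hx => hle x (Multiset.mem_of_mem_erase hx)) hsum')
  rcases le_or_gt m n with hmn | hnm
  · refine (countColex_lt_of_forall_lt ?_ (fun x hx => le_of_mem_greedyComposition hm hx)
      fun x hx => (hle x hx).lt_of_ne fun h => hmν (h ▸ hx)).le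
    rw [greedyComposition_of_le hm hmn]
    exact List.mem_cons_self
  · subst hsum
    exact countColex_le_greedyComposition_of_sum_lt hpos hnm

theorem Lmap_zero (p : ℕ) : Lmap p 0 = 0 := by
  simp [Lmap]

theorem Lmap_add (p : ℕ) (s t : Multiset ℕ) : Lmap p (s + t) = Lmap p s + Lmap p t := by
  simp only [Lmap, Multiset.map_add, Multiset.sum_add, Multiset.replicate_add,
    Multiset.filter_add]
  abel

theorem Lmap_singleton (p a : ℕ) : Lmap p {a} = ↑(greedyComposition (p + 1) a) := by
  unfold Lmap greedyComposition
  split_ifs with h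
  · simp [h, ← Multiset.coe_replicate]
  · simp [h, Multiset.filter_singleton, ← Multiset.coe_replicate]
    rfl

theorem Lmap_coe (p : ℕ) (l : List ℕ) :
    Lmap p ↑l = ↑(l.map (greedyComposition (p + 1))).flatten := by
  induction l with
  | nil => exact Lmap_zero p
  | cons a l ih =>
    rw [← Multiset.cons_coe, ← Multiset.singleton_add, Lmap_add, Lmap_singleton, ih]
    rfl

def IsTiling (c : List (List ℕ)) (l : List ℕ) : Prop :=
  List.Forall₂ (fun comp row => (∀ x ∈ comp, 0 < x) ∧ comp.sum = row) c l

theorem finite_setOf_isTiling (l : List ℕ) : {c | IsTiling c l}.Finite := by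
  induction l with
  | nil => simp [IsTiling]
  | cons row l ih =>
    refine ((Set.finite_range (Composition.blocks (n := row))).image2 List.cons ih).subset ?_
    intro _ h
    obtain ⟨comp, c, ⟨hpos, hsum⟩, hc, rfl⟩ := List.forall₂_cons_right_iff.1 h
    exact ⟨comp, ⟨⟨comp, hpos _, hsum⟩, rfl⟩, c, hc, rfl⟩

theorem dominoCount_ne_zero_iff {l : List ℕ} {μ : Multiset ℕ} :
    dominoCount l μ ≠ 0 ↔ ∃ c, IsTiling c l ∧ ↑c.flatten = μ := by
  have : Finite {c // IsTiling c l ∧ ↑c.flatten = μ} :=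
    ((finite_setOf_isTiling l).subset fun _ hc => hc.1).to_subtype
  rw [dominoCount, Nat.card_ne_zero, nonempty_subtype]
  exact and_iff_left this

theorem isTiling_map_greedyComposition (p : ℕ) (l : List ℕ) :
    IsTiling (l.map (greedyComposition (p + 1))) l := by
  rw [IsTiling, List.forall₂_map_left_iff, List.forall₂_same]
  exact fun row _ => ⟨fun _ => pos_of_mem_greedyComposition p.succ_pos,
    sum_greedyComposition row⟩

theorem countColex_flatten_le_Lmap {p : ℕ} {c : List (List ℕ)} {l : List ℕ}
    (hc : IsTiling c l) (hle : ∀ x ∈ c.flatten, x ≤ p + 1) :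
    countColex ↑c.flatten ≤ countColex (Lmap p ↑l) := by
  induction hc with
  | nil => exact (Lmap_zero p).symm ▸ le_rfl
  | @cons comp row c l hrow _ ih =>
    simp only [List.flatten_cons, List.mem_append] at hle
    rw [List.flatten_cons, ← Multiset.coe_add, ← Multiset.cons_coe, ← Multiset.singleton_add,
      Lmap_add, Lmap_singleton, countColex_add, countColex_add]
    exact add_le_add
      (countColex_le_greedyComposition p.succ_pos _ _ hrow.1 (fun x hx => hle x (.inl hx)) hrow.2)
      (ih fun x hx => hle x (.inr hx))

end DominoTabloid

theorem stmt_6_general (p : ℕ) (l : List ℕ) :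
    dominoCount l (Lmap p ↑l) ≠ 0 ∧
    ∀ μ : Multiset ℕ, (∀ x ∈ μ, x ≤ p + 1) → dominoCount l μ ≠ 0 →
      descSort μ = descSort (Lmap p ↑l) ∨
        List.Lex (· < ·) (descSort μ) (descSort (Lmap p ↑l)) := by
  open DominoTabloid in
  refine ⟨dominoCount_ne_zero_iff.2
    ⟨_, isTiling_map_greedyComposition p l, (Lmap_coe p l).symm⟩, fun μ hμ hne => ?_⟩
  obtain ⟨c, hc, rfl⟩ := dominoCount_ne_zero_iff.1 hne
  exact descSort_eq_or_lex_of_countColex_le (countColex_flatten_le_Lmap hc hμ)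

/-- For a partition `λ` with all parts in `{k,...,k+p}` (k ≥ 1), `d_{λ,L(λ)} ≠ 0`, and
`L(λ)` is lexicographically largest among all partitions `μ` with parts at most `p+1`
such that `d_{λ,μ} ≠ 0`. -/
theorem stmt_6 (k p : ℕ) (hk : 1 ≤ k) (l : List ℕ)
    (hparts : ∀ x ∈ l, k ≤ x ∧ x ≤ k + p) :
    dominoCount l (Lmap p ↑l) ≠ 0 ∧
    ∀ μ : Multiset ℕ, (∀ x ∈ μ, x ≤ p + 1) → dominoCount l μ ≠ 0 →
      descSort μ = descSort (Lmap p ↑l) ∨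
        List.Lex (· < ·) (descSort μ) (descSort (Lmap p ↑l)) :=
  stmt_6_general p l
end

section
/- For a sequence β = (β_1,...,β_n) ∈ (ℕ²)^n and a lattice diagram α = (α_1,...,α_n) of distinct points in ℕ², the action of the MacMahon monomial symmetric differential operator satisfies m_β(∂_X, ∂_Y) Δ_α = ∑_δ c_δ Δ_{α − δ}, where the sum is over distinct permutations δ of β, each c_δ is a nonnegative integer, and c_δ = 0 whenever α_i − δ_i ∉ ℕ² for some i. -/
open MvPolynomial

/-- The constant-coefficient differential operator associated to a polynomial `P`,
applied to `Q`: each monomial `∏ xᵢ^{dᵢ}` of `P` acts as `∏ (∂/∂xᵢ)^{dᵢ}`. -/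
noncomputable def diffOp {σ : Type*} [Fintype σ] [DecidableEq σ]
    (P Q : MvPolynomial σ ℂ) : MvPolynomial σ ℂ :=
  ∑ d ∈ P.support,
    P.coeff d •
      ((d.support.toList.map fun i =>
          ((pderiv i).toLinearMap : Module.End ℂ (MvPolynomial σ ℂ)) ^ d i).prod) Q

/-- The lattice determinant `Δ_α = det(x_j^{α_{i,1}} y_j^{α_{i,2}})`. -/
noncomputable def latticeDet (n : ℕ) (α : Fin n → ℕ × ℕ) :
    MvPolynomial (Fin n ⊕ Fin n) ℂ :=
  Matrix.det (Matrix.of fun i j : Fin n =>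
    X (Sum.inl j) ^ (α i).1 * X (Sum.inr j) ^ (α i).2)

/-- The MacMahon monomial symmetric function `m_β = ∑_δ z_1^{δ_1} ⋯ z_n^{δ_n}`, summed
over the distinct permutations `δ` of `β`, where `z_j^{(c,d)} = x_j^c y_j^d`. -/
noncomputable def macMahon (n : ℕ) (β : Fin n → ℕ × ℕ) :
    MvPolynomial (Fin n ⊕ Fin n) ℂ :=
  ∑ δ ∈ Finset.image (fun τ : Equiv.Perm (Fin n) => β ∘ τ) Finset.univ,
    ∏ i, X (Sum.inl i) ^ (δ i).1 * X (Sum.inr i) ^ (δ i).2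

/-! Expand `Δ_α = ∑_σ sgn σ · z^{α∘σ}`. The operator `∂^δ` sends `z^γ` to
`(∏_i (γ_{i,1})_{δ_{i,1}} (γ_{i,2})_{δ_{i,2}}) · z^{γ-δ}` with falling factorials. In the `σ`-th
term of the determinant, reindex the orbit of `β` by `δ ↦ δ ∘ σ`: the falling-factorial
coefficient becomes `c_δ = ∏_i (α_{i,1})_{δ_{i,1}} (α_{i,2})_{δ_{i,2}}`, independent of `σ`, and
what remains of the sum over `σ` is `Δ_{α-δ}`. The coefficient `c_δ` vanishes unless `δ_i ≤ α_i`
for all `i`. -/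

namespace MvPolynomial

variable {R σ : Type*} [CommSemiring R]

noncomputable def pderivPow (d : σ →₀ ℕ) : Module.End R (MvPolynomial σ R) :=
  (d.support.toList.map fun i =>
    ((pderiv i).toLinearMap : Module.End R (MvPolynomial σ R)) ^ d i).prod

theorem pderiv_pow_monomial (i : σ) (k : ℕ) (u : σ →₀ ℕ) (c : R) :
    (((pderiv i).toLinearMap : Module.End R (MvPolynomial σ R)) ^ k) (monomial u c) =
      (u i).descFactorial k • monomial (u - Finsupp.single i k) c := by
  induction k generalizing u c with
  | zero => simp
  | succ k ih =>
    have hsub : u - Finsupp.single i 1 - Finsupp.single i k = u - Finsupp.single i (k + 1) := by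
      rw [tsub_tsub, ← Finsupp.single_add, add_comm]
    have hdesc : (u i - 1).descFactorial k * u i = (u i).descFactorial (k + 1) := by
      cases u i with
      | zero => simp
      | succ m => rw [Nat.add_sub_cancel, Nat.succ_descFactorial_succ, mul_comm]
    rw [pow_succ, Module.End.mul_apply, Derivation.coeFn_coe, pderiv_monomial, ih,
      Finsupp.tsub_apply, Finsupp.single_eq_same, hsub, ← hdesc, smul_monomial, smul_monomial]
    congr 1
    simp only [nsmul_eq_mul]
    push_cast
    ring

theorem list_prod_map_pderiv_pow_monomial (d : σ → ℕ) (l : List σ) (hl : l.Nodup)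
    (u : σ →₀ ℕ) (c : R) :
    (l.map fun i => ((pderiv i).toLinearMap : Module.End R (MvPolynomial σ R)) ^ d i).prod
        (monomial u c) =
      (l.map fun i => (u i).descFactorial (d i)).prod •
        monomial (u - (l.map fun i => Finsupp.single i (d i)).sum) c := by
  induction l with
  | nil => simp
  | cons a l ih =>
    obtain ⟨ha, hl⟩ := List.nodup_cons.mp hl
    have hsum_a : (l.map fun i => Finsupp.single i (d i)).sum a = 0 := by
      rw [← Finsupp.applyAddHom_apply, map_list_sum, List.map_map]
      exact List.sum_eq_zero fun x hx => by
        obtain ⟨i, hi, rfl⟩ := List.mem_map.mp hx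
        exact Finsupp.single_eq_of_ne fun h => ha (h ▸ hi)
    rw [List.map_cons, List.prod_cons, Module.End.mul_apply, ih hl, map_nsmul,
      pderiv_pow_monomial, Finsupp.tsub_apply, hsum_a, Nat.sub_zero, smul_smul, tsub_tsub,
      List.map_cons, List.map_cons, List.prod_cons, List.sum_cons,
      add_comm (Finsupp.single a (d a)), mul_comm]

-- When `d ≰ u` the truncated difference `u - d` is harmless: the coefficient is then `0`.
theorem pderivPow_monomial (d u : σ →₀ ℕ) (c : R) :
    pderivPow d (monomial u c) =
      (d.prod fun i k => (u i).descFactorial k) • monomial (u - d) c := by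
  rw [pderivPow, list_prod_map_pderiv_pow_monomial _ _ d.support.nodup_toList,
    Finset.prod_map_toList, Finset.sum_map_toList]
  congr
  exact Finsupp.sum_single d

end MvPolynomial

open MvPolynomial

theorem diffOp_eq_sum {σ : Type*} [Fintype σ] [DecidableEq σ] (P Q : MvPolynomial σ ℂ) :
    diffOp P Q = (AddMonoidAlgebra.coeff P).sum fun d c => c • pderivPow d Q :=
  (sum_def (b := fun d c => c • pderivPow d Q)).symm

theorem diffOp_sum_monomial {σ ι : Type*} [Fintype σ] [DecidableEq σ] (s : Finset ι)
    (e : ι → σ →₀ ℕ) (c : ι → ℂ) (Q : MvPolynomial σ ℂ) :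
    diffOp (∑ i ∈ s, monomial (e i) (c i)) Q = ∑ i ∈ s, c i • pderivPow (e i) Q := by
  rw [diffOp_eq_sum, AddMonoidAlgebra.coeff_sum,
    ← Finsupp.sum_finsetSum_index (h := fun d (c : ℂ) => c • pderivPow d Q)
      (fun _ => zero_smul _ _) (fun _ _ _ => add_smul _ _ _)]
  exact Finset.sum_congr rfl fun i _ => sum_monomial_eq (zero_smul ℂ _)

section PairExponent

variable {ι : Type*}

noncomputable def pairExponent [Finite ι] (γ : ι → ℕ × ℕ) : ι ⊕ ι →₀ ℕ :=
  Finsupp.equivFunOnFinite.symm (Sum.elim (fun i => (γ i).1) (fun i => (γ i).2))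

theorem pairExponent_sub [Finite ι] (γ δ : ι → ℕ × ℕ) :
    pairExponent γ - pairExponent δ = pairExponent (γ - δ) := by
  ext (i | i) <;> rfl

theorem monomial_pairExponent [Fintype ι] (γ : ι → ℕ × ℕ) :
    monomial (pairExponent γ) (1 : ℂ) =
      ∏ i, X (Sum.inl i) ^ (γ i).1 * X (Sum.inr i) ^ (γ i).2 := by
  rw [monomial_eq, C_1, one_mul, Finsupp.prod_fintype _ _ fun _ => pow_zero _,
    Fintype.prod_sum_type, ← Finset.prod_mul_distrib]
  rfl

def descFactorialProd [Fintype ι] (γ δ : ι → ℕ × ℕ) : ℕ :=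
  ∏ i, (γ i).1.descFactorial (δ i).1 * (γ i).2.descFactorial (δ i).2

theorem descFactorialProd_comp [Fintype ι] (γ δ : ι → ℕ × ℕ) (σ : Equiv.Perm ι) :
    descFactorialProd (γ ∘ σ) (δ ∘ σ) = descFactorialProd γ δ :=
  Equiv.prod_comp σ fun i => (γ i).1.descFactorial (δ i).1 * (γ i).2.descFactorial (δ i).2

theorem descFactorialProd_eq_zero [Fintype ι] {γ δ : ι → ℕ × ℕ} {i : ι} (h : ¬ δ i ≤ γ i) :
    descFactorialProd γ δ = 0 := by
  refine Finset.prod_eq_zero (Finset.mem_univ i) ?_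
  rcases not_and_or.mp h with h | h
  · rw [Nat.descFactorial_eq_zero_iff_lt.mpr (not_le.mp h), zero_mul]
  · rw [Nat.descFactorial_eq_zero_iff_lt.mpr (not_le.mp h), mul_zero]

theorem pderivPow_monomial_pairExponent [Fintype ι] (γ δ : ι → ℕ × ℕ) (c : ℂ) :
    pderivPow (pairExponent δ) (monomial (pairExponent γ) c) =
      descFactorialProd γ δ • monomial (pairExponent (γ - δ)) c := by
  rw [pderivPow_monomial, Finsupp.prod_fintype _ _ fun _ => Nat.descFactorial_zero _,
    Fintype.prod_sum_type, ← Finset.prod_mul_distrib, pairExponent_sub]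
  rfl

end PairExponent

theorem Finset.sum_image_comp_perm {ι α M : Type*} [Fintype ι] [DecidableEq ι]
    [DecidableEq (ι → α)] [AddCommMonoid M] (β : ι → α) (σ : Equiv.Perm ι)
    (f : (ι → α) → M) :
    ∑ δ ∈ Finset.univ.image (fun τ : Equiv.Perm ι => β ∘ τ), f (δ ∘ σ) =
      ∑ δ ∈ Finset.univ.image (fun τ : Equiv.Perm ι => β ∘ τ), f δ := by
  refine Finset.sum_nbij' (· ∘ σ) (· ∘ σ.symm) ?_ ?_ ?_ ?_ fun _ _ => rfl
  · simp only [Finset.mem_image, Finset.mem_univ, true_and]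
    rintro _ ⟨τ, rfl⟩
    exact ⟨τ * σ, rfl⟩
  · simp only [Finset.mem_image, Finset.mem_univ, true_and]
    rintro _ ⟨τ, rfl⟩
    exact ⟨τ * σ.symm, rfl⟩
  · intro δ _
    simp [Function.comp_assoc]
  · intro δ _
    simp [Function.comp_assoc]

theorem macMahon_eq_sum_monomial (n : ℕ) (β : Fin n → ℕ × ℕ) :
    macMahon n β = ∑ δ ∈ Finset.univ.image (fun τ : Equiv.Perm (Fin n) => β ∘ τ),
      monomial (pairExponent δ) 1 :=
  Finset.sum_congr rfl fun δ _ => (monomial_pairExponent δ).symm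

theorem latticeDet_eq_sum (n : ℕ) (γ : Fin n → ℕ × ℕ) :
    latticeDet n γ = ∑ σ : Equiv.Perm (Fin n),
      Equiv.Perm.sign σ • monomial (pairExponent (γ ∘ σ)) 1 := by
  rw [latticeDet, Matrix.det_apply]
  exact Finset.sum_congr rfl fun σ _ => by rw [monomial_pairExponent]; rfl

theorem pderivPow_latticeDet (n : ℕ) (γ δ : Fin n → ℕ × ℕ) :
    pderivPow (pairExponent δ) (latticeDet n γ) = ∑ σ : Equiv.Perm (Fin n),
      Equiv.Perm.sign σ • descFactorialProd (γ ∘ σ) δ •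
        monomial (pairExponent (γ ∘ σ - δ)) 1 := by
  rw [latticeDet_eq_sum, map_sum]
  exact Finset.sum_congr rfl fun σ _ => by
    rw [LinearMap.map_smul_of_tower, pderivPow_monomial_pairExponent]

theorem diffOp_macMahon_latticeDet (n : ℕ) (β α : Fin n → ℕ × ℕ) :
    diffOp (macMahon n β) (latticeDet n α) =
      ∑ δ ∈ Finset.univ.image (fun τ : Equiv.Perm (Fin n) => β ∘ τ),
        descFactorialProd α δ • latticeDet n (α - δ) := by
  rw [macMahon_eq_sum_monomial, diffOp_sum_monomial]
  simp_rw [one_smul, pderivPow_latticeDet, latticeDet_eq_sum, Finset.smul_sum]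
  refine Finset.sum_comm.trans ((Finset.sum_congr rfl fun σ _ => ?_).trans Finset.sum_comm)
  -- reindexing by `δ ↦ δ ∘ σ` turns `α ∘ σ - δ` into `(α - δ) ∘ σ`
  refine (Finset.sum_image_comp_perm β σ _).symm.trans (Finset.sum_congr rfl fun δ _ => ?_)
  rw [descFactorialProd_comp, smul_comm]
  rfl

theorem stmt_11_general (n : ℕ) (β α : Fin n → ℕ × ℕ) :
    ∃ c : (Fin n → ℕ × ℕ) → ℕ,
      diffOp (macMahon n β) (latticeDet n α) =
        (∑ δ ∈ Finset.image (fun τ : Equiv.Perm (Fin n) => β ∘ τ) Finset.univ,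
          (c δ : ℂ) • latticeDet n (fun i => ((α i).1 - (δ i).1, (α i).2 - (δ i).2))) ∧
      ∀ δ : Fin n → ℕ × ℕ,
        (∃ i, ¬ ((δ i).1 ≤ (α i).1 ∧ (δ i).2 ≤ (α i).2)) → c δ = 0 := by
  refine ⟨descFactorialProd α, ?_, fun δ ⟨i, hi⟩ => descFactorialProd_eq_zero hi⟩
  simp_rw [Nat.cast_smul_eq_nsmul]
  exact diffOp_macMahon_latticeDet n β α

/-- For `β ∈ (ℕ²)^n` and a lattice diagram `α` of distinct points,
`m_β(∂_X,∂_Y) Δ_α = ∑_δ c_δ Δ_{α−δ}`, the sum over distinct permutations `δ` of `β`,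
with nonnegative integer coefficients `c_δ`, and `c_δ = 0` whenever `α_i − δ_i ∉ ℕ²`
for some `i`. -/
theorem stmt_11 (n : ℕ) (β α : Fin n → ℕ × ℕ) (hα : Function.Injective α) :
    ∃ c : (Fin n → ℕ × ℕ) → ℕ,
      diffOp (macMahon n β) (latticeDet n α) =
        (∑ δ ∈ Finset.image (fun τ : Equiv.Perm (Fin n) => β ∘ τ) Finset.univ,
          (c δ : ℂ) • latticeDet n (fun i => ((α i).1 - (δ i).1, (α i).2 - (δ i).2))) ∧
      ∀ δ : Fin n → ℕ × ℕ,
        (∃ i, ¬ ((δ i).1 ≤ (α i).1 ∧ (δ i).2 ≤ (α i).2)) → c δ = 0 :=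
  stmt_11_general n β α
end

section
/- Fix positive integers m and n. There is a bijection between column-strict tableaux V with n cells over the alphabet A = {(a,0): a ∈ ℕ} ∪ {(0,b): b ∈ ℕ} (ordered by a − b, ties broken by a) satisfying v_m = (0,0) (where v_m is the entry of V corresponding to m under standardization), and pairs (C, α) where C is the cocharge diagram of some standard tableau and α ∈ A^n is weakly increasing with α_m = (0,0); the bijection sends V to (C, α) where C = cochg(std(V)) and α_i = v_i − c_i for all i. -/
open scoped Classical

/-! Statement 17: the bijection between column-strict tableaux over the axis alphabet
`A ⊂ ℕ²` with `(0,0)` at standardization position `m`, and pairs `(C, α)` of a cocharge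
diagram `C` and a weakly increasing sequence `α ∈ A^n` with `α_m = (0,0)`.

Cells are pairs `(row, column) ∈ ℕ × ℕ` in French convention (rows from the bottom).
Alphabet values are encoded in `ℤ × ℤ`; the alphabet `A` consists of points of `ℕ²`
lying on one of the axes, ordered by `a − b` with ties broken by `a`. -/

/-- The strict order on the alphabet `A'`: `(a₁,b₁) < (a₂,b₂)` iff `a₁−b₁ < a₂−b₂`,
or `a₁−b₁ = a₂−b₂` and `a₁ < a₂`. -/
def ALT (x y : ℤ × ℤ) : Prop :=
  x.1 - x.2 < y.1 - y.2 ∨ (x.1 - x.2 = y.1 - y.2 ∧ x.1 < y.1)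

/-- The corresponding weak order. -/
def ALE (x y : ℤ × ℤ) : Prop := ALT x y ∨ x = y

/-- Membership in the alphabet `A`: a point of `ℕ²` lying on an axis. -/
def inA (x : ℤ × ℤ) : Prop := 0 ≤ x.1 ∧ 0 ≤ x.2 ∧ (x.1 = 0 ∨ x.2 = 0)

/-- A (French) Ferrers diagram: a lower set of cells. -/
def IsDiagram (D : Finset (ℕ × ℕ)) : Prop :=
  ∀ p ∈ D, ∀ q : ℕ × ℕ, q.1 ≤ p.1 → q.2 ≤ p.2 → q ∈ D

/-- `d` precedes `x` in standardization order: smaller value, or equal value and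
`d` strictly north of `x` (larger row) or in the same row strictly west. -/
def stdPrec (f : ℕ × ℕ → ℤ × ℤ) (d x : ℕ × ℕ) : Prop :=
  ALT (f d) (f x) ∨ (f d = f x ∧ (x.1 < d.1 ∨ (d.1 = x.1 ∧ d.2 < x.2)))

/-- The standardization of a filling `f` of `D`: the cell `x` receives
`1 + #{cells preceding x}` (and `0` outside `D`). -/
noncomputable def stdF (D : Finset (ℕ × ℕ)) (f : ℕ × ℕ → ℤ × ℤ) (x : ℕ × ℕ) : ℕ :=
  if x ∈ D then 1 + (D.filter (fun d => stdPrec f d x)).card else 0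

/-- The cell of `D` carrying entry `i` of an (injective) filling `g`. -/
def cellOf (D : Finset (ℕ × ℕ)) (g : ℕ × ℕ → ℕ) (i : ℕ) : ℕ × ℕ :=
  (D.filter (fun x => g x = i)).sum id

/-- The row of the entry `i`. -/
def rowOf (D : Finset (ℕ × ℕ)) (g : ℕ × ℕ → ℕ) (i : ℕ) : ℕ := (cellOf D g i).1

/-- The cocharge statistic of a standard tableau `g` on `D`: `π(1) = 0` and
`π(i) = π(i−1) + 1` if `i` occurs weakly northwest of (here: in a strictly higher
row than) `i−1`, and `π(i) = π(i−1)` otherwise. -/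
def piStat (D : Finset (ℕ × ℕ)) (g : ℕ × ℕ → ℕ) : ℕ → ℕ
  | 0 => 0
  | 1 => 0
  | i + 2 => piStat D g (i + 1) + (if rowOf D g (i + 1) < rowOf D g (i + 2) then 1 else 0)

/-- The unique order- and cover-preserving map `ℕ → A` sending `s` to `(0,0)`. -/
def hmap (s t : ℕ) : ℤ × ℤ := if s ≤ t then ((t : ℤ) - s, 0) else (0, (s : ℤ) - t)

/-- The cocharge diagram of a standard tableau `g` on `D`: entry `i` is replaced by
`h(π(i))`, where `h` is the order- and cover-preserving map `ℕ → A` with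
`h(π(m)) = (0,0)`. -/
def cochgF (m : ℕ) (D : Finset (ℕ × ℕ)) (g : ℕ × ℕ → ℕ) (x : ℕ × ℕ) : ℤ × ℤ :=
  if x ∈ D then hmap (piStat D g m) (piStat D g (g x)) else 0

/-- A standard tableau on `D`: a bijective filling by `1,...,|D|`, increasing along rows
and columns (and `0` outside `D`). -/
def IsStandard (D : Finset (ℕ × ℕ)) (g : ℕ × ℕ → ℕ) : Prop :=
  Set.BijOn g ↑D (Set.Icc 1 D.card) ∧
  (∀ x ∈ D, ∀ y ∈ D, x.1 = y.1 → x.2 < y.2 → g x < g y) ∧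
  (∀ x ∈ D, ∀ y ∈ D, x.2 = y.2 → x.1 < y.1 → g x < g y) ∧
  (∀ x, x ∉ D → g x = 0)

/-- A column-strict filling: rows weakly increasing left to right, columns strictly
increasing bottom to top. -/
def IsColStrict (D : Finset (ℕ × ℕ)) (f : ℕ × ℕ → ℤ × ℤ) : Prop :=
  (∀ x ∈ D, ∀ y ∈ D, x.1 = y.1 → x.2 ≤ y.2 → ALE (f x) (f y)) ∧
  (∀ x ∈ D, ∀ y ∈ D, x.2 = y.2 → x.1 < y.1 → ALT (f x) (f y))

/-- The set of column-strict tableaux `V` with `n` cells over the alphabet `A`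
whose entry at the cell carrying `m` in the standardization is `(0,0)`. -/
def S1 (n m : ℕ) : Set (Finset (ℕ × ℕ) × (ℕ × ℕ → ℤ × ℤ)) :=
  {Df | IsDiagram Df.1 ∧ Df.1.card = n ∧ (∀ x ∈ Df.1, inA (Df.2 x)) ∧
        IsColStrict Df.1 Df.2 ∧ (∀ x, x ∉ Df.1 → Df.2 x = 0) ∧
        (∀ x ∈ Df.1, stdF Df.1 Df.2 x = m → Df.2 x = 0)}

/-- The set of pairs `(C, α)` where `C` is the cocharge diagram of some standard tableau
with `n` cells and `α ∈ A^n` is weakly increasing with `α_m = (0,0)` (indices `1,...,n`;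
`α` is normalized to `0` outside this range). -/
def S2 (n m : ℕ) : Set ((Finset (ℕ × ℕ) × (ℕ × ℕ → ℤ × ℤ)) × (ℕ → ℤ × ℤ)) :=
  {CA | (∃ g, IsStandard CA.1.1 g ∧ CA.1.2 = cochgF m CA.1.1 g) ∧
        IsDiagram CA.1.1 ∧ CA.1.1.card = n ∧
        (∀ i, 1 ≤ i → i + 1 ≤ n → ALE (CA.2 i) (CA.2 (i + 1))) ∧
        (∀ i, 1 ≤ i → i ≤ n → inA (CA.2 i)) ∧
        CA.2 m = 0 ∧ (∀ i, i = 0 ∨ n < i → CA.2 i = 0)}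

/-- The map `V ↦ (C, α)` with `C = cochg(std(V))` and `α_i = v_i − c_i` (componentwise
subtraction at the cell carrying `i`). -/
noncomputable def Phi (n m : ℕ) (Df : Finset (ℕ × ℕ) × (ℕ × ℕ → ℤ × ℤ)) :
    (Finset (ℕ × ℕ) × (ℕ × ℕ → ℤ × ℤ)) × (ℕ → ℤ × ℤ) :=
  ((Df.1, cochgF m Df.1 (stdF Df.1 Df.2)),
    fun i =>
      if 1 ≤ i ∧ i ≤ n then
        Df.2 (cellOf Df.1 (stdF Df.1 Df.2) i) -
          cochgF m Df.1 (stdF Df.1 Df.2) (cellOf Df.1 (stdF Df.1 Df.2) i)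
      else 0)

namespace S17

def phi (x : ℤ × ℤ) : ℤ := x.1 - x.2

lemma alt_irrefl (x : ℤ × ℤ) : ¬ ALT x x := by
  rintro (h | ⟨h1, h2⟩) <;> omega

lemma alt_trans {x y z : ℤ × ℤ} (h1 : ALT x y) (h2 : ALT y z) : ALT x z := by
  rcases h1 with h1 | ⟨h1, h1'⟩ <;> rcases h2 with h2 | ⟨h2, h2'⟩ <;> unfold ALT <;> omega

lemma alt_total {x y : ℤ × ℤ} (h : x ≠ y) : ALT x y ∨ ALT y x := by
  have : x.1 ≠ y.1 ∨ x.2 ≠ y.2 := by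
    by_contra hc; push_neg at hc; exact h (Prod.ext hc.1 hc.2)
  unfold ALT; omega

lemma alt_asymm {x y : ℤ × ℤ} (h : ALT x y) : ¬ ALT y x := by
  intro h'; exact alt_irrefl x (alt_trans h h')

lemma alt_phi_le {x y : ℤ × ℤ} (h : ALT x y) : phi x ≤ phi y := by
  rcases h with h | ⟨h, _⟩ <;> unfold phi <;> omega

lemma ale_phi_le {x y : ℤ × ℤ} (h : ALE x y) : phi x ≤ phi y := by
  rcases h with h | rfl
  · exact alt_phi_le h
  · exact le_refl _

lemma inA_phi_eq {x y : ℤ × ℤ} (hx : inA x) (hy : inA y) (h : phi x = phi y) : x = y := by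
  obtain ⟨hx1, hx2, hx3⟩ := hx; obtain ⟨hy1, hy2, hy3⟩ := hy
  unfold phi at h
  have : x.1 = y.1 ∧ x.2 = y.2 := by omega
  exact Prod.ext this.1 this.2

lemma alt_iff {x y : ℤ × ℤ} (hx : inA x) (hy : inA y) : ALT x y ↔ phi x < phi y := by
  constructor
  · intro h
    rcases h with h | ⟨h, h'⟩
    · exact h
    · exact absurd (inA_phi_eq hx hy h) (by intro e; rw [e] at h'; omega)
  · intro h; exact Or.inl h

lemma ale_iff {x y : ℤ × ℤ} (hx : inA x) (hy : inA y) : ALE x y ↔ phi x ≤ phi y := by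
  constructor
  · exact ale_phi_le
  · intro h
    rcases lt_or_eq_of_le h with h | h
    · exact Or.inl (Or.inl h)
    · exact Or.inr (inA_phi_eq hx hy h)

lemma ale_refl (x : ℤ × ℤ) : ALE x x := Or.inr rfl

lemma inA_zero : inA 0 := ⟨le_refl _, le_refl _, Or.inl rfl⟩

lemma phi_zero : phi 0 = 0 := rfl

lemma inA_snd_eq_zero {x : ℤ × ℤ} (hx : inA x) (h : 0 ≤ phi x) : x.2 = 0 := by
  obtain ⟨h1, h2, h3⟩ := hx; unfold phi at h; omega

lemma inA_fst_eq_zero {x : ℤ × ℤ} (hx : inA x) (h : phi x ≤ 0) : x.1 = 0 := by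
  obtain ⟨h1, h2, h3⟩ := hx; unfold phi at h; omega

lemma phi_sub (x y : ℤ × ℤ) : phi (x - y) = phi x - phi y := by
  simp [phi, Prod.sub_def]; ring

lemma phi_add (x y : ℤ × ℤ) : phi (x + y) = phi x + phi y := by
  simp [phi, Prod.add_def]; ring

lemma inA_sub_right {v c : ℤ × ℤ} (hv : inA v) (hc : inA c) (h0 : 0 ≤ phi c)
    (h1 : phi c ≤ phi v) : inA (v - c) := by
  have hc2 := inA_snd_eq_zero hc h0
  have hv2 := inA_snd_eq_zero hv (le_trans h0 h1)
  obtain ⟨a1, a2, a3⟩ := hv; obtain ⟨b1, b2, b3⟩ := hc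
  unfold phi at *
  refine ⟨by simp [Prod.sub_def]; omega, by simp [Prod.sub_def]; omega, Or.inr (by simp [Prod.sub_def]; omega)⟩

lemma inA_sub_left {v c : ℤ × ℤ} (hv : inA v) (hc : inA c) (h0 : phi v ≤ phi c)
    (h1 : phi c ≤ 0) : inA (v - c) := by
  have hc1 := inA_fst_eq_zero hc h1
  have hv1 := inA_fst_eq_zero hv (le_trans h0 h1)
  obtain ⟨a1, a2, a3⟩ := hv; obtain ⟨b1, b2, b3⟩ := hc
  unfold phi at *
  refine ⟨by simp [Prod.sub_def]; omega, by simp [Prod.sub_def]; omega, Or.inl (by simp [Prod.sub_def]; omega)⟩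

lemma inA_add_nonneg {a b : ℤ × ℤ} (ha : inA a) (hb : inA b) (h0 : 0 ≤ phi a)
    (h1 : 0 ≤ phi b) : inA (a + b) := by
  have ha2 := inA_snd_eq_zero ha h0
  have hb2 := inA_snd_eq_zero hb h1
  obtain ⟨a1, a2, a3⟩ := ha; obtain ⟨b1, b2, b3⟩ := hb
  refine ⟨by simp [Prod.add_def]; omega, by simp [Prod.add_def]; omega, Or.inr (by simp [Prod.add_def]; omega)⟩

lemma inA_add_nonpos {a b : ℤ × ℤ} (ha : inA a) (hb : inA b) (h0 : phi a ≤ 0)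
    (h1 : phi b ≤ 0) : inA (a + b) := by
  have ha1 := inA_fst_eq_zero ha h0
  have hb1 := inA_fst_eq_zero hb h1
  obtain ⟨a1, a2, a3⟩ := ha; obtain ⟨b1, b2, b3⟩ := hb
  refine ⟨by simp [Prod.add_def]; omega, by simp [Prod.add_def]; omega, Or.inl (by simp [Prod.add_def]; omega)⟩

/-! ### hmap lemmas -/

lemma inA_hmap (s t : ℕ) : inA (hmap s t) := by
  unfold hmap; split <;> rename_i h
  · exact ⟨by omega, le_refl _, Or.inr rfl⟩
  · exact ⟨le_refl _, by omega, Or.inl rfl⟩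

lemma phi_hmap (s t : ℕ) : phi (hmap s t) = (t : ℤ) - s := by
  unfold hmap phi; split <;> rename_i h <;> simp <;> omega

lemma hmap_self (s : ℕ) : hmap s s = 0 := by
  unfold hmap; simp

/-! ### stdPrec is a strict linear order -/

lemma stdPrec_irrefl (f : ℕ × ℕ → ℤ × ℤ) (x : ℕ × ℕ) : ¬ stdPrec f x x := by
  rintro (h | ⟨_, h⟩)
  · exact alt_irrefl _ h
  · omega

lemma stdPrec_trans {f : ℕ × ℕ → ℤ × ℤ} {x y z : ℕ × ℕ}
    (h1 : stdPrec f x y) (h2 : stdPrec f y z) : stdPrec f x z := by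
  rcases h1 with h1 | ⟨e1, t1⟩ <;> rcases h2 with h2 | ⟨e2, t2⟩
  · exact Or.inl (alt_trans h1 h2)
  · exact Or.inl (e2 ▸ h1)
  · exact Or.inl (e1 ▸ h2)
  · exact Or.inr ⟨e1.trans e2, by omega⟩

lemma stdPrec_total {f : ℕ × ℕ → ℤ × ℤ} {x y : ℕ × ℕ} (h : x ≠ y) :
    stdPrec f x y ∨ stdPrec f y x := by
  by_cases he : f x = f y
  · have hp : x.1 ≠ y.1 ∨ x.2 ≠ y.2 := by
      by_contra hc; push_neg at hc; exact h (Prod.ext hc.1 hc.2)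
    unfold stdPrec
    rcases Nat.lt_trichotomy x.1 y.1 with hlt | heq | hgt
    · exact Or.inr (Or.inr ⟨he.symm, Or.inl hlt⟩)
    · rcases Nat.lt_trichotomy x.2 y.2 with h2 | h2 | h2
      · exact Or.inl (Or.inr ⟨he, Or.inr ⟨heq, h2⟩⟩)
      · omega
      · exact Or.inr (Or.inr ⟨he.symm, Or.inr ⟨heq.symm, h2⟩⟩)
    · exact Or.inl (Or.inr ⟨he, Or.inl hgt⟩)
  · rcases alt_total he with h' | h'
    · exact Or.inl (Or.inl h')
    · exact Or.inr (Or.inl h')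

lemma stdPrec_asymm {f : ℕ × ℕ → ℤ × ℤ} {x y : ℕ × ℕ} (h : stdPrec f x y) :
    ¬ stdPrec f y x := fun h' => stdPrec_irrefl f x (stdPrec_trans h h')

lemma stdPrec_ale {f : ℕ × ℕ → ℤ × ℤ} {x y : ℕ × ℕ} (h : stdPrec f x y) :
    ALE (f x) (f y) := by
  rcases h with h | ⟨h, _⟩
  · exact Or.inl h
  · exact Or.inr h

/-! ### rank of a strict linear order on a finset -/

section Rank

variable {α : Type*} {r : α → α → Prop}
variable (hirr : ∀ x, ¬ r x x) (htr : ∀ {x y z}, r x y → r y z → r x z)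
    (htot : ∀ {x y}, x ≠ y → r x y ∨ r y x)
variable {D : Finset α}

noncomputable def rnk (r : α → α → Prop) (D : Finset α) (x : α) : ℕ :=
  1 + (D.filter (fun d => r d x)).card

include hirr htr in
lemma rnk_lt_rnk {x y : α} (hx : x ∈ D) (hr : r x y) :
    rnk r D x < rnk r D y := by
  have hss : D.filter (fun d => r d x) ⊂ D.filter (fun d => r d y) := by
    constructor
    · intro d hd
      simp only [Finset.mem_filter] at *
      exact ⟨hd.1, htr hd.2 hr⟩
    · intro hsub
      have : x ∈ D.filter (fun d => r d y) := Finset.mem_filter.mpr ⟨hx, hr⟩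
      have := hsub this
      simp only [Finset.mem_filter] at this
      exact hirr x this.2
  have := Finset.card_lt_card hss
  unfold rnk; omega

include hirr htr htot in
lemma rnk_of_lt {x y : α} (hx : x ∈ D) (hy : y ∈ D)
    (h : rnk r D x < rnk r D y) : r x y := by
  by_cases hxy : x = y
  · subst hxy; omega
  · rcases htot hxy with h' | h'
    · exact h'
    · exact absurd (rnk_lt_rnk hirr htr hy h') (by omega)

include hirr in
lemma rnk_le_card {x : α} (hx : x ∈ D) : rnk r D x ≤ D.card := by
  have hsub : D.filter (fun d => r d x) ⊆ D.erase x := by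
    intro d hd
    simp only [Finset.mem_filter] at hd
    refine Finset.mem_erase.mpr ⟨?_, hd.1⟩
    rintro rfl; exact hirr d hd.2
  have h1 := Finset.card_le_card hsub
  have h2 := Finset.card_erase_of_mem hx
  have h3 : 0 < D.card := Finset.card_pos.mpr ⟨x, hx⟩
  unfold rnk; omega

include hirr htr htot in
lemma rnk_bijOn : Set.BijOn (rnk r D) ↑D (Set.Icc 1 D.card) := by
  have hmaps : Set.MapsTo (rnk r D) ↑D (Set.Icc 1 D.card) := by
    intro x hx
    exact ⟨by unfold rnk; omega, rnk_le_card hirr hx⟩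
  have hinj : Set.InjOn (rnk r D) ↑D := by
    intro x hx y hy hxy
    by_contra hne
    rcases htot hne with h | h
    · exact absurd hxy (by have := rnk_lt_rnk hirr htr (D := D) hx h; omega)
    · exact absurd hxy (by have := rnk_lt_rnk hirr htr (D := D) hy h; omega)
  refine ⟨hmaps, hinj, ?_⟩
  have himg : Finset.image (rnk r D) D = Finset.Icc 1 D.card := by
    apply Finset.eq_of_subset_of_card_le
    · intro j hj
      obtain ⟨x, hx, rfl⟩ := Finset.mem_image.mp hj
      exact Finset.mem_Icc.mpr ⟨by unfold rnk; omega, rnk_le_card hirr hx⟩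
    · rw [Nat.card_Icc]
      rw [Finset.card_image_of_injOn hinj]
      omega
  intro j hj
  have : j ∈ Finset.Icc 1 D.card := Finset.mem_Icc.mpr ⟨hj.1, hj.2⟩
  rw [← himg] at this
  obtain ⟨x, hx, hxj⟩ := Finset.mem_image.mp this
  exact ⟨x, hx, hxj⟩

end Rank

/-! ### standardization -/

lemma stdF_eq_rnk {D : Finset (ℕ × ℕ)} (f : ℕ × ℕ → ℤ × ℤ) {x : ℕ × ℕ} (hx : x ∈ D) :
    stdF D f x = rnk (stdPrec f) D x := by
  unfold stdF rnk; rw [if_pos hx]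

lemma stdF_bijOn (D : Finset (ℕ × ℕ)) (f : ℕ × ℕ → ℤ × ℤ) :
    Set.BijOn (stdF D f) ↑D (Set.Icc 1 D.card) := by
  refine Set.BijOn.congr
    (rnk_bijOn (stdPrec_irrefl f) (fun h h' => stdPrec_trans h h') (fun h => stdPrec_total h))
    ?_
  intro x hx
  exact (stdF_eq_rnk f hx).symm

lemma stdF_lt {D : Finset (ℕ × ℕ)} {f : ℕ × ℕ → ℤ × ℤ} {x y : ℕ × ℕ}
    (hx : x ∈ D) (hy : y ∈ D) (h : stdPrec f x y) : stdF D f x < stdF D f y := by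
  rw [stdF_eq_rnk f hx, stdF_eq_rnk f hy]
  exact rnk_lt_rnk (stdPrec_irrefl f) (fun h h' => stdPrec_trans h h') hx h

lemma stdPrec_of_stdF_lt {D : Finset (ℕ × ℕ)} {f : ℕ × ℕ → ℤ × ℤ} {x y : ℕ × ℕ}
    (hx : x ∈ D) (hy : y ∈ D) (h : stdF D f x < stdF D f y) : stdPrec f x y := by
  rw [stdF_eq_rnk f hx, stdF_eq_rnk f hy] at h
  exact rnk_of_lt (stdPrec_irrefl f) (fun h h' => stdPrec_trans h h')
    (fun h => stdPrec_total h) hx hy h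

lemma isStandard_stdF {D : Finset (ℕ × ℕ)} {f : ℕ × ℕ → ℤ × ℤ}
    (hf : IsColStrict D f) : IsStandard D (stdF D f) := by
  refine ⟨stdF_bijOn D f, ?_, ?_, ?_⟩
  · intro x hx y hy hrow hcol
    apply stdF_lt hx hy
    rcases hf.1 x hx y hy hrow (le_of_lt hcol) with h | h
    · exact Or.inl h
    · exact Or.inr ⟨h, Or.inr ⟨hrow, hcol⟩⟩
  · intro x hx y hy hcol hrow
    exact stdF_lt hx hy (Or.inl (hf.2 x hx y hy hcol hrow))
  · intro x hx; unfold stdF; rw [if_neg hx]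

/-! ### standard tableaux -/

lemma std_mem_Icc {D : Finset (ℕ × ℕ)} {g : ℕ × ℕ → ℕ} (hg : IsStandard D g)
    {x : ℕ × ℕ} (hx : x ∈ D) : 1 ≤ g x ∧ g x ≤ D.card := by
  have := hg.1.1 hx; exact ⟨this.1, this.2⟩

lemma std_injOn {D : Finset (ℕ × ℕ)} {g : ℕ × ℕ → ℕ} (hg : IsStandard D g) :
    Set.InjOn g ↑D := hg.1.2.1

lemma cellOf_std {D : Finset (ℕ × ℕ)} {g : ℕ × ℕ → ℕ} (hg : IsStandard D g)
    {x : ℕ × ℕ} (hx : x ∈ D) : cellOf D g (g x) = x := by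
  unfold cellOf
  have : D.filter (fun y => g y = g x) = {x} := by
    apply Finset.ext
    intro y
    simp only [Finset.mem_filter, Finset.mem_singleton]
    constructor
    · rintro ⟨hy, hyx⟩; exact std_injOn hg hy hx hyx
    · rintro rfl; exact ⟨hx, rfl⟩
  rw [this, Finset.sum_singleton]; rfl

lemma exists_cell {D : Finset (ℕ × ℕ)} {g : ℕ × ℕ → ℕ} (hg : IsStandard D g)
    {i : ℕ} (h1 : 1 ≤ i) (h2 : i ≤ D.card) :
    cellOf D g i ∈ D ∧ g (cellOf D g i) = i := by
  obtain ⟨x, hx, hxi⟩ := hg.1.2.2 (Set.mem_Icc.mpr ⟨h1, h2⟩)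
  rw [← hxi, cellOf_std hg hx]
  exact ⟨hx, rfl⟩

lemma rowOf_std {D : Finset (ℕ × ℕ)} {g : ℕ × ℕ → ℕ} (hg : IsStandard D g)
    {x : ℕ × ℕ} (hx : x ∈ D) : rowOf D g (g x) = x.1 := by
  unfold rowOf; rw [cellOf_std hg hx]

/-! ### the cocharge statistic -/

lemma pi_succ (D : Finset (ℕ × ℕ)) (g : ℕ × ℕ → ℕ) {i : ℕ} (hi : 1 ≤ i) :
    piStat D g (i + 1) =
      piStat D g i + (if rowOf D g i < rowOf D g (i + 1) then 1 else 0) := by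
  obtain ⟨k, rfl⟩ := Nat.exists_eq_add_of_le' hi
  show piStat D g (k + 2) = _
  rw [piStat]

lemma pi_le_succ (D : Finset (ℕ × ℕ)) (g : ℕ × ℕ → ℕ) (i : ℕ) :
    piStat D g i ≤ piStat D g (i + 1) := by
  rcases Nat.eq_zero_or_pos i with rfl | hi
  · simp [piStat]
  · rw [pi_succ D g hi]; omega

lemma pi_succ_le (D : Finset (ℕ × ℕ)) (g : ℕ × ℕ → ℕ) (i : ℕ) :
    piStat D g (i + 1) ≤ piStat D g i + 1 := by
  rcases Nat.eq_zero_or_pos i with rfl | hi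
  · simp [piStat]
  · rw [pi_succ D g hi]; split <;> omega

lemma pi_mono (D : Finset (ℕ × ℕ)) (g : ℕ × ℕ → ℕ) {i j : ℕ} (h : i ≤ j) :
    piStat D g i ≤ piStat D g j := by
  induction j, h using Nat.le_induction with
  | base => exact le_refl _
  | succ j hij ih => exact le_trans ih (pi_le_succ D g j)

lemma row_le_of_pi_eq (D : Finset (ℕ × ℕ)) (g : ℕ × ℕ → ℕ) {i j : ℕ}
    (hi : 1 ≤ i) (hij : i ≤ j) (h : piStat D g i = piStat D g j) :
    rowOf D g j ≤ rowOf D g i := by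
  induction j, hij using Nat.le_induction with
  | base => exact le_refl _
  | succ j hij ih =>
    have h1 : piStat D g i ≤ piStat D g j := pi_mono D g hij
    have h2 : piStat D g j ≤ piStat D g (j + 1) := pi_le_succ D g j
    have hj1 : 1 ≤ j := le_trans hi hij
    have heq : piStat D g j = piStat D g i := by omega
    have hs := pi_succ D g hj1
    have : ¬ rowOf D g j < rowOf D g (j + 1) := by
      intro hc; rw [if_pos hc] at hs; omega
    exact le_trans (by omega) (ih heq.symm)

lemma pi_lt_of_row_lt (D : Finset (ℕ × ℕ)) (g : ℕ × ℕ → ℕ) {i j : ℕ}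
    (hi : 1 ≤ i) (hij : i ≤ j) (h : rowOf D g i < rowOf D g j) :
    piStat D g i < piStat D g j := by
  have h1 : piStat D g i ≤ piStat D g j := pi_mono D g hij
  rcases lt_or_eq_of_le h1 with h' | h'
  · exact h'
  · exact absurd (row_le_of_pi_eq D g hi hij h') (by omega)

/-! ### the cocharge diagram -/

lemma cochg_apply (m : ℕ) {D : Finset (ℕ × ℕ)} (g : ℕ × ℕ → ℕ) {x : ℕ × ℕ} (hx : x ∈ D) :
    cochgF m D g x = hmap (piStat D g m) (piStat D g (g x)) := by
  unfold cochgF; rw [if_pos hx]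

lemma inA_cochg (m : ℕ) {D : Finset (ℕ × ℕ)} (g : ℕ × ℕ → ℕ) {x : ℕ × ℕ} (hx : x ∈ D) :
    inA (cochgF m D g x) := by
  rw [cochg_apply m g hx]; exact inA_hmap _ _

lemma phi_cochg (m : ℕ) {D : Finset (ℕ × ℕ)} (g : ℕ × ℕ → ℕ) {x : ℕ × ℕ} (hx : x ∈ D) :
    phi (cochgF m D g x) = (piStat D g (g x) : ℤ) - piStat D g m := by
  rw [cochg_apply m g hx, phi_hmap]

/-! ### recovering `g` from fillings built on its cocharge diagram -/

lemma card_filter_lt {D : Finset (ℕ × ℕ)} {g : ℕ × ℕ → ℕ} (hg : IsStandard D g)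
    {x : ℕ × ℕ} (hx : x ∈ D) :
    (D.filter (fun d => g d < g x)).card = g x - 1 := by
  have hgx := std_mem_Icc hg hx
  have himg : Finset.image g (D.filter (fun d => g d < g x)) = Finset.Icc 1 (g x - 1) := by
    apply Finset.ext
    intro j
    simp only [Finset.mem_image, Finset.mem_filter, Finset.mem_Icc]
    constructor
    · rintro ⟨d, ⟨hd, hdx⟩, rfl⟩
      have := std_mem_Icc hg hd
      omega
    · rintro ⟨hj1, hj2⟩
      obtain ⟨d, hd, hdj⟩ := hg.1.2.2 (Set.mem_Icc.mpr ⟨hj1, by omega⟩)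
      exact ⟨d, ⟨hd, by omega⟩, hdj⟩
  have hinj : Set.InjOn g ↑(D.filter (fun d => g d < g x)) := by
    intro a ha b hb
    simp only [Finset.coe_filter, Set.mem_setOf_eq] at ha hb
    exact std_injOn hg ha.1 hb.1
  have := Finset.card_image_of_injOn hinj
  rw [himg, Nat.card_Icc] at this
  omega

lemma stdF_eq_of_prec {D : Finset (ℕ × ℕ)} {g : ℕ × ℕ → ℕ} {f : ℕ × ℕ → ℤ × ℤ}
    (hg : IsStandard D g)
    (hp : ∀ d ∈ D, ∀ x ∈ D, g d < g x → stdPrec f d x) : stdF D f = g := by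
  funext x
  by_cases hx : x ∈ D
  · have hfil : D.filter (fun d => stdPrec f d x) = D.filter (fun d => g d < g x) := by
      apply Finset.ext
      intro d
      simp only [Finset.mem_filter]
      constructor
      · rintro ⟨hd, hdx⟩
        refine ⟨hd, ?_⟩
        by_contra hc
        have hne : d ≠ x := by rintro rfl; exact stdPrec_irrefl f d hdx
        have hgne : g d ≠ g x := fun h => hne (std_injOn hg hd hx h)
        have : g x < g d := by omega
        exact stdPrec_asymm hdx (hp x hx d hd this)
      · rintro ⟨hd, hdx⟩
        exact ⟨hd, hp d hd x hx hdx⟩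
    unfold stdF
    rw [if_pos hx, hfil, card_filter_lt hg hx]
    have := std_mem_Icc hg hx
    omega
  · unfold stdF
    rw [if_neg hx, (hg.2.2.2 x hx).symm]

lemma stdF_add_eq (m : ℕ) {D : Finset (ℕ × ℕ)} {g : ℕ × ℕ → ℕ} (hg : IsStandard D g)
    (α : ℕ → ℤ × ℤ)
    (hmono : ∀ i j, 1 ≤ i → i ≤ j → j ≤ D.card → phi (α i) ≤ phi (α j))
    (hinj : ∀ i j, 1 ≤ i → i ≤ D.card → 1 ≤ j → j ≤ D.card →
      phi (α i) = phi (α j) → α i = α j) :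
    stdF D (fun y => cochgF m D g y + α (g y)) = g := by
  apply stdF_eq_of_prec hg
  intro d hd x hx hdx
  have hbd := std_mem_Icc hg hd
  have hbx := std_mem_Icc hg hx
  have hpiC : (piStat D g (g d) : ℤ) ≤ piStat D g (g x) := by
    exact_mod_cast pi_mono D g (le_of_lt hdx)
  have hphiC : phi (cochgF m D g d) ≤ phi (cochgF m D g x) := by
    rw [phi_cochg m g hd, phi_cochg m g hx]; omega
  have hphiα : phi (α (g d)) ≤ phi (α (g x)) :=
    hmono _ _ hbd.1 (le_of_lt hdx) hbx.2
  rcases lt_or_eq_of_le (add_le_add hphiC hphiα) with hlt | heq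
  · exact Or.inl (Or.inl (by rw [show ∀ a b : ℤ × ℤ, (a + b).1 - (a + b).2 = phi (a + b)
      from fun a b => rfl, show ∀ a b : ℤ × ℤ, (a + b).1 - (a + b).2 = phi (a + b)
      from fun a b => rfl, phi_add, phi_add]; exact hlt))
  · -- equal phi's: values coincide, use position tie-break
    have hCeq : phi (cochgF m D g d) = phi (cochgF m D g x) := by omega
    have hαeq : phi (α (g d)) = phi (α (g x)) := by omega
    have hpieq : piStat D g (g d) = piStat D g (g x) := by
      rw [phi_cochg m g hd, phi_cochg m g hx] at hCeq
      omega
    have hC : cochgF m D g d = cochgF m D g x := by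
      rw [cochg_apply m g hd, cochg_apply m g hx, hpieq]
    have hα : α (g d) = α (g x) := hinj _ _ hbd.1 hbd.2 hbx.1 hbx.2 hαeq
    have hfeq : cochgF m D g d + α (g d) = cochgF m D g x + α (g x) := by rw [hC, hα]
    have hrow : rowOf D g (g x) ≤ rowOf D g (g d) :=
      row_le_of_pi_eq D g hbd.1 (le_of_lt hdx) hpieq
    rw [rowOf_std hg hx, rowOf_std hg hd] at hrow
    refine Or.inr ⟨hfeq, ?_⟩
    rcases lt_or_eq_of_le hrow with h1 | h1
    · exact Or.inl h1
    · refine Or.inr ⟨h1.symm, ?_⟩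
      rcases Nat.lt_trichotomy d.2 x.2 with h2 | h2 | h2
      · exact h2
      · exact absurd hdx (by rw [show d = x from Prod.ext h1.symm h2]; omega)
      · exact absurd (hg.2.1 x hx d hd h1 h2) (by omega)

lemma stdF_cochg (m : ℕ) {D : Finset (ℕ × ℕ)} {g : ℕ × ℕ → ℕ} (hg : IsStandard D g) :
    stdF D (cochgF m D g) = g := by
  have h := stdF_add_eq m hg (fun _ => 0)
    (fun i j _ _ _ => le_refl _) (fun i j _ _ _ _ _ => rfl)
  have : (fun y => cochgF m D g y + (0 : ℤ × ℤ)) = cochgF m D g := by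
    funext y; exact add_zero _
  rwa [this] at h

/-! ### key inequalities for column-strict fillings -/

lemma key_step {D : Finset (ℕ × ℕ)} {f : ℕ × ℕ → ℤ × ℤ} (hcs : IsColStrict D f)
    (hA : ∀ x ∈ D, inA (f x)) {i : ℕ} (h1 : 1 ≤ i) (h2 : i + 1 ≤ D.card) :
    (piStat D (stdF D f) (i + 1) : ℤ) - piStat D (stdF D f) i ≤
      phi (f (cellOf D (stdF D f) (i + 1))) - phi (f (cellOf D (stdF D f) i)) := by
  have hg := isStandard_stdF hcs
  set g := stdF D f with hgdef
  obtain ⟨hx, hgx⟩ := exists_cell hg h1 (by omega)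
  obtain ⟨hy, hgy⟩ := exists_cell hg (by omega) h2
  have hprec : stdPrec f (cellOf D g i) (cellOf D g (i + 1)) := by
    apply stdPrec_of_stdF_lt hx hy
    rw [← hgdef, hgx, hgy]; omega
  rw [pi_succ D g h1]
  by_cases hr : rowOf D g i < rowOf D g (i + 1)
  · rw [if_pos hr]
    have hlt : phi (f (cellOf D g i)) < phi (f (cellOf D g (i + 1))) := by
      rcases hprec with halt | ⟨_, htie⟩
      · exact (alt_iff (hA _ hx) (hA _ hy)).mp halt
      · unfold rowOf at hr; omega
    push_cast; omega
  · rw [if_neg hr]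
    have := ale_phi_le (stdPrec_ale hprec)
    push_cast; omega

lemma key_diff {D : Finset (ℕ × ℕ)} {f : ℕ × ℕ → ℤ × ℤ} (hcs : IsColStrict D f)
    (hA : ∀ x ∈ D, inA (f x)) {i j : ℕ} (h1 : 1 ≤ i) (hij : i ≤ j) (h2 : j ≤ D.card) :
    (piStat D (stdF D f) j : ℤ) - piStat D (stdF D f) i ≤
      phi (f (cellOf D (stdF D f) j)) - phi (f (cellOf D (stdF D f) i)) := by
  induction j, hij using Nat.le_induction with
  | base => omega
  | succ j hij ih =>
    have hj1 : 1 ≤ j := le_trans h1 hij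
    have := key_step hcs hA hj1 h2
    have := ih (by omega)
    omega

/-! ### the forward map lands in `S2` -/

lemma phi_mapsTo (n m : ℕ) (hm : 1 ≤ m) (hmn : m ≤ n) :
    Set.MapsTo (Phi n m) (S1 n m) (S2 n m) := by
  rintro ⟨D, f⟩ ⟨hdiag, hcard, hA, hcs, hout, hvm⟩
  dsimp only at hdiag hcard hA hcs hout hvm
  have hg := isStandard_stdF hcs
  have hcell : ∀ i, 1 ≤ i → i ≤ n →
      cellOf D (stdF D f) i ∈ D ∧ stdF D f (cellOf D (stdF D f) i) = i := by
    intro i h1 h2; exact exists_cell hg h1 (by omega)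
  have hvmval : f (cellOf D (stdF D f) m) = 0 := by
    obtain ⟨hmem, hgm⟩ := hcell m hm hmn
    exact hvm _ hmem hgm
  have hc : ∀ i, 1 ≤ i → i ≤ n → cochgF m D (stdF D f) (cellOf D (stdF D f) i) =
      hmap (piStat D (stdF D f) m) (piStat D (stdF D f) i) := by
    intro i h1 h2
    obtain ⟨hmem, hgi⟩ := hcell i h1 h2
    rw [cochg_apply m (stdF D f) hmem, hgi]
  have hkd : ∀ i j, 1 ≤ i → i ≤ j → j ≤ n →
      (piStat D (stdF D f) j : ℤ) - piStat D (stdF D f) i ≤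
        phi (f (cellOf D (stdF D f) j)) - phi (f (cellOf D (stdF D f) i)) := by
    intro i j h1 hij h2; exact key_diff hcs hA h1 hij (by omega)
  have hinAα : ∀ i, 1 ≤ i → i ≤ n →
      inA (f (cellOf D (stdF D f) i) - cochgF m D (stdF D f) (cellOf D (stdF D f) i)) := by
    intro i h1 h2
    obtain ⟨hmem, _⟩ := hcell i h1 h2
    rw [hc i h1 h2]
    rcases le_total m i with hmi | him
    · apply inA_sub_right (hA _ hmem) (inA_hmap _ _)
      · rw [phi_hmap]
        have := pi_mono D (stdF D f) hmi
        push_cast; omega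
      · rw [phi_hmap]
        have h3 := hkd m i hm hmi h2
        rw [hvmval, phi_zero] at h3
        omega
    · apply inA_sub_left (hA _ hmem) (inA_hmap _ _)
      · rw [phi_hmap]
        have h3 := hkd i m h1 him hmn
        rw [hvmval, phi_zero] at h3
        omega
      · rw [phi_hmap]
        have := pi_mono D (stdF D f) him
        push_cast; omega
  refine ⟨⟨stdF D f, hg, rfl⟩, hdiag, hcard, ?_, ?_, ?_, ?_⟩
  · -- weakly increasing
    intro i h1 h2
    show ALE (if 1 ≤ i ∧ i ≤ n then _ else 0) (if 1 ≤ i + 1 ∧ i + 1 ≤ n then _ else 0)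
    rw [if_pos ⟨h1, by omega⟩, if_pos ⟨by omega, h2⟩]
    refine (ale_iff (hinAα i h1 (by omega)) (hinAα (i + 1) (by omega) h2)).mpr ?_
    rw [phi_sub, phi_sub, hc i h1 (by omega), hc (i + 1) (by omega) h2, phi_hmap, phi_hmap]
    have := hkd i (i + 1) h1 (by omega) h2
    omega
  · -- values in A
    intro i h1 h2
    show inA (if 1 ≤ i ∧ i ≤ n then _ else 0)
    rw [if_pos ⟨h1, h2⟩]
    exact hinAα i h1 h2
  · -- value 0 at m
    show (if 1 ≤ m ∧ m ≤ n then
        f (cellOf D (stdF D f) m) - cochgF m D (stdF D f) (cellOf D (stdF D f) m)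
      else 0) = 0
    rw [if_pos ⟨hm, hmn⟩, hvmval, hc m hm hmn, hmap_self]
    simp
  · -- zero outside the range
    intro i hi
    show (if 1 ≤ i ∧ i ≤ n then _ else 0) = 0
    rw [if_neg (by omega)]

lemma ale_trans {x y z : ℤ × ℤ} (h1 : ALE x y) (h2 : ALE y z) : ALE x z := by
  rcases h1 with h1 | rfl
  · rcases h2 with h2 | rfl
    · exact Or.inl (alt_trans h1 h2)
    · exact Or.inl h1
  · exact h2

/-! ### injectivity -/

lemma phi_injOn (n m : ℕ) (hm : 1 ≤ m) (hmn : m ≤ n) :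
    Set.InjOn (Phi n m) (S1 n m) := by
  rintro ⟨D, f⟩ h1 ⟨D', f'⟩ h2 heq
  obtain ⟨hdiag, hcard, hA, hcs, hout, hvm⟩ := h1
  obtain ⟨hdiag', hcard', hA', hcs', hout', hvm'⟩ := h2
  dsimp only at hdiag hcard hA hcs hout hvm hdiag' hcard' hA' hcs' hout' hvm'
  have hD : D = D' := congrArg (fun p => p.1.1) heq
  subst hD
  have hg := isStandard_stdF hcs
  have hg' := isStandard_stdF hcs'
  have hC : cochgF m D (stdF D f) = cochgF m D (stdF D f') :=
    congrArg (fun p => p.1.2) heq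
  have hα : (fun i => if 1 ≤ i ∧ i ≤ n then
        f (cellOf D (stdF D f) i) - cochgF m D (stdF D f) (cellOf D (stdF D f) i)
      else 0) = (fun i => if 1 ≤ i ∧ i ≤ n then
        f' (cellOf D (stdF D f') i) - cochgF m D (stdF D f') (cellOf D (stdF D f') i)
      else 0) := congrArg (fun p => p.2) heq
  have hgg : stdF D f = stdF D f' := by
    rw [← stdF_cochg m hg, ← stdF_cochg m hg', hC]
  have hf : f = f' := by
    funext x
    by_cases hx : x ∈ D
    · have hbd := std_mem_Icc hg hx
      have hcnd : 1 ≤ stdF D f x ∧ stdF D f x ≤ n := ⟨hbd.1, by omega⟩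
      have h := congrFun hα (stdF D f x)
      rw [if_pos hcnd, if_pos hcnd, ← hgg, cellOf_std hg hx] at h
      exact sub_left_injective h
    · rw [hout x hx, hout' x hx]
  rw [hf]

/-! ### surjectivity -/

lemma phi_surjOn (n m : ℕ) (hm : 1 ≤ m) (hmn : m ≤ n) :
    Set.SurjOn (Phi n m) (S1 n m) (S2 n m) := by
  rintro ⟨⟨D, C⟩, α⟩ ⟨⟨g, hg, hC⟩, hdiag, hcard, hmono, hinA, hαm, hzero⟩
  replace hg : IsStandard D g := hg
  replace hC : C = cochgF m D g := hC
  replace hdiag : IsDiagram D := hdiag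
  replace hcard : D.card = n := hcard
  replace hmono : ∀ i, 1 ≤ i → i + 1 ≤ n → ALE (α i) (α (i + 1)) := hmono
  replace hinA : ∀ i, 1 ≤ i → i ≤ n → inA (α i) := hinA
  replace hαm : α m = 0 := hαm
  replace hzero : ∀ i, i = 0 ∨ n < i → α i = 0 := hzero
  -- the chain of inequalities for α
  have hchain : ∀ i j, 1 ≤ i → i ≤ j → j ≤ n → ALE (α i) (α j) := by
    intro i j h1 hij
    induction j, hij using Nat.le_induction with
    | base => intro _; exact ale_refl _
    | succ j hij ih =>
      intro h2
      exact ale_trans (ih (by omega)) (hmono j (by omega) h2)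
  have hphichain : ∀ i j, 1 ≤ i → i ≤ j → j ≤ n → phi (α i) ≤ phi (α j) :=
    fun i j h1 hij h2 => ale_phi_le (hchain i j h1 hij h2)
  have hsign_ge : ∀ i, m ≤ i → i ≤ n → 0 ≤ phi (α i) := by
    intro i h1 h2
    have := hphichain m i hm h1 h2
    rw [hαm, phi_zero] at this
    exact this
  have hsign_le : ∀ i, 1 ≤ i → i ≤ m → phi (α i) ≤ 0 := by
    intro i h1 h2
    have := hphichain i m h1 h2 hmn
    rw [hαm, phi_zero] at this
    exact this
  -- the candidate filling
  set f : ℕ × ℕ → ℤ × ℤ := fun y => cochgF m D g y + α (g y) with hfdef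
  have hα0 : α 0 = 0 := hzero 0 (Or.inl rfl)
  have hstdF : stdF D f = g := by
    apply stdF_add_eq m hg α
    · intro i j h1 hij h2
      exact hphichain i j h1 hij (by omega)
    · intro i j hi1 hi2 hj1 hj2 hphi
      exact inA_phi_eq (hinA i hi1 (by omega)) (hinA j hj1 (by omega)) hphi
  have hbd : ∀ x ∈ D, 1 ≤ g x ∧ g x ≤ n := by
    intro x hx
    have := std_mem_Icc hg hx
    omega
  have hfA : ∀ x ∈ D, inA (f x) := by
    intro x hx
    obtain ⟨hb1, hb2⟩ := hbd x hx
    rcases le_total m (g x) with hmi | him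
    · apply inA_add_nonneg (inA_cochg m g hx) (hinA _ hb1 hb2)
      · rw [phi_cochg m g hx]
        have := pi_mono D g hmi
        push_cast; omega
      · exact hsign_ge _ hmi hb2
    · apply inA_add_nonpos (inA_cochg m g hx) (hinA _ hb1 hb2)
      · rw [phi_cochg m g hx]
        have := pi_mono D g him
        push_cast; omega
      · exact hsign_le _ hb1 him
  have hfout : ∀ x, x ∉ D → f x = 0 := by
    intro x hx
    show cochgF m D g x + α (g x) = 0
    rw [hg.2.2.2 x hx, hα0]
    unfold cochgF
    rw [if_neg hx, add_zero]
  have hfcs : IsColStrict D f := by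
    constructor
    · intro x hx y hy hrow hcol
      by_cases hxy : x = y
      · rw [hxy]; exact ale_refl _
      · have hcol' : x.2 < y.2 := by
          rcases lt_or_eq_of_le hcol with h | h
          · exact h
          · exact absurd (Prod.ext hrow h) hxy
        have hgxy : g x < g y := hg.2.1 x hx y hy hrow hcol'
        exact stdPrec_ale (stdPrec_of_stdF_lt hx hy (by rw [hstdF]; exact hgxy))
    · intro x hx y hy hcol hrow
      have hgxy : g x < g y := hg.2.2.1 x hx y hy hcol hrow
      obtain ⟨hb1, hb2⟩ := hbd x hx
      obtain ⟨hb1', hb2'⟩ := hbd y hy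
      have hpi : piStat D g (g x) < piStat D g (g y) := by
        apply pi_lt_of_row_lt D g hb1 (le_of_lt hgxy)
        rw [rowOf_std hg hx, rowOf_std hg hy]
        exact hrow
      refine (alt_iff (hfA x hx) (hfA y hy)).mpr ?_
      show phi (cochgF m D g x + α (g x)) < phi (cochgF m D g y + α (g y))
      rw [phi_add, phi_add, phi_cochg m g hx, phi_cochg m g hy]
      have := hphichain (g x) (g y) hb1 (le_of_lt hgxy) hb2'
      push_cast; omega
  have hfvm : ∀ x ∈ D, stdF D f x = m → f x = 0 := by
    intro x hx hxm
    rw [hstdF] at hxm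
    show cochgF m D g x + α (g x) = 0
    rw [cochg_apply m g hx, hxm, hmap_self, hαm, add_zero]
  refine ⟨(D, f), ⟨hdiag, hcard, hfA, hfcs, hfout, hfvm⟩, ?_⟩
  -- Phi (D, f) = ((D, C), α)
  have hfst : (D, cochgF m D (stdF D f)) = (D, C) := by
    rw [hstdF, ← hC]
  have hsnd : (fun i => if 1 ≤ i ∧ i ≤ n then
      f (cellOf D (stdF D f) i) - cochgF m D (stdF D f) (cellOf D (stdF D f) i)
    else 0) = α := by
    funext i
    by_cases hi : 1 ≤ i ∧ i ≤ n
    · rw [if_pos hi, hstdF]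
      obtain ⟨hmem, hgi⟩ := exists_cell hg hi.1 (by omega)
      show cochgF m D g (cellOf D g i) + α (g (cellOf D g i)) - cochgF m D g (cellOf D g i) = α i
      rw [hgi, add_sub_cancel_left]
    · rw [if_neg hi]
      exact (hzero i (by omega)).symm
  show ((D, cochgF m D (stdF D f)), fun i => if 1 ≤ i ∧ i ≤ n then
      f (cellOf D (stdF D f) i) - cochgF m D (stdF D f) (cellOf D (stdF D f) i)
    else 0) = ((D, C), α)
  rw [hfst, hsnd]

end S17

/-- The map `V ↦ (cochg(std V), α)`, `α_i = v_i − c_i`, is a bijection between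
column-strict `A`-tableaux with `n` cells and `v_m = (0,0)`, and pairs `(C, α)` of a
cocharge diagram of a standard tableau with `n` cells and a weakly increasing
`α ∈ A^n` with `α_m = (0,0)`. -/
theorem stmt_17 (n m : ℕ) (hm : 1 ≤ m) (hmn : m ≤ n) :
    Set.BijOn (Phi n m) (S1 n m) (S2 n m) :=
  ⟨S17.phi_mapsTo n m hm hmn, S17.phi_injOn n m hm hmn, S17.phi_surjOn n m hm hmn⟩
end
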